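/- arXiv:2601.19685 — 8 statements merged into one kernel-verified Lean document; each statement's English description precedes it below -/
import Mathlib

section
/- For every natural number j and every real number ξ, the Hermite function x ↦ H_j(x) e^{−x²/2} is mapped by the Fourier transform to itself up to the factor i^j; precisely, (1/√(2π)) ∫_ℝ e^{iξx} H_j(x) e^{−x²/2} dx = i^j · H_j(ξ) e^{−ξ²/2} (an identity of complex numbers). -/
open MeasureTheory

/-- Physicists' Hermite polynomial `H_j`, defined via the Rodrigues formula
`H_j(z) = (-1)^j e^{z²} (d/dz)^j e^{-z²}` (its entire/polynomial extension to `ℂ`). -/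
noncomputable def physHermite (j : ℕ) (z : ℂ) : ℂ :=
  (-1 : ℂ) ^ j * Complex.exp (z ^ 2) * iteratedDeriv j (fun w => Complex.exp (-w ^ 2)) z

section aux

open Real Complex Polynomial FourierTransform

noncomputable def HP : ℕ → Polynomial ℂ
  | 0 => 1
  | (n+1) => C 2 * X * HP n - derivative (HP n)

lemma hasDerivAt_poly_gauss2 (Q : Polynomial ℂ) (z : ℂ) :
    HasDerivAt (fun w : ℂ => Q.eval w * Complex.exp (-w ^ 2))
      ((Q.derivative.eval z - 2 * z * Q.eval z) * Complex.exp (-z ^ 2)) z := by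
  have h2 : HasDerivAt (fun w : ℂ => -w ^ 2) (-(2 * z)) z := by
    simpa using (hasDerivAt_pow 2 z).fun_neg
  have he := h2.cexp
  have := (Q.hasDerivAt z).mul he
  exact this.congr_deriv (by ring)

lemma iteratedDeriv_gauss (n : ℕ) :
    iteratedDeriv n (fun w : ℂ => Complex.exp (-w ^ 2)) =
      fun z => (-1 : ℂ) ^ n * (HP n).eval z * Complex.exp (-z ^ 2) := by
  induction n with
  | zero => simp [HP]
  | succ n ih =>
      rw [iteratedDeriv_succ, ih]
      funext z
      have h : HasDerivAt (fun w : ℂ => (-1 : ℂ) ^ n * ((HP n).eval w * Complex.exp (-w ^ 2)))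
          ((-1 : ℂ) ^ n * (((HP n).derivative.eval z - 2 * z * (HP n).eval z)
            * Complex.exp (-z ^ 2))) z := (hasDerivAt_poly_gauss2 (HP n) z).const_mul _
      have h' : HasDerivAt (fun w : ℂ => (-1 : ℂ) ^ n * (HP n).eval w * Complex.exp (-w ^ 2))
          ((-1 : ℂ) ^ n * (((HP n).derivative.eval z - 2 * z * (HP n).eval z)
            * Complex.exp (-z ^ 2))) z := by
        simpa [mul_assoc] using h
      rw [h'.deriv, HP]
      simp only [eval_sub, eval_mul, eval_ofNat, eval_X, eval_C]
      ring

lemma physHermite_eq (n : ℕ) (z : ℂ) :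
    (-1 : ℂ) ^ n * Complex.exp (z ^ 2) * iteratedDeriv n (fun w => Complex.exp (-w ^ 2)) z
      = (HP n).eval z := by
  rw [iteratedDeriv_gauss]
  have : Complex.exp (z ^ 2) * Complex.exp (-z ^ 2) = 1 := by
    rw [← Complex.exp_add]; simp
  calc (-1 : ℂ) ^ n * Complex.exp (z ^ 2) * ((-1 : ℂ) ^ n * (HP n).eval z * Complex.exp (-z ^ 2))
      = ((-1 : ℂ) ^ n * (-1 : ℂ) ^ n) * (HP n).eval z
        * (Complex.exp (z ^ 2) * Complex.exp (-z ^ 2)) := by ring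
    _ = (HP n).eval z := by
        rw [← pow_add, this, Even.neg_one_pow ⟨n, rfl⟩]; ring

lemma integrable_abs_pow_gauss (k : ℕ) :
    Integrable (fun x : ℝ => |x| ^ k * Real.exp (-(1/2) * x ^ 2)) := by
  have h := (integrable_rpow_mul_exp_neg_mul_sq (by norm_num : (0:ℝ) < 1/2)
    (s := (k : ℝ)) (by have : (0:ℝ) ≤ k := Nat.cast_nonneg k; linarith)).abs
  simpa [Real.rpow_natCast, abs_mul, abs_pow, abs_of_pos (Real.exp_pos _)] using h

lemma integrable_poly_gauss (Q : Polynomial ℂ) :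
    Integrable (fun x : ℝ => Q.eval (x : ℂ) * Complex.exp (-(x:ℂ) ^ 2 / 2)) := by
  have base : ∀ k : ℕ, Integrable (fun x : ℝ => (x:ℂ) ^ k * Complex.exp (-(x:ℂ) ^ 2 / 2)) := by
    intro k
    apply (integrable_abs_pow_gauss k).mono'
    · exact (Continuous.aestronglyMeasurable (by fun_prop))
    · filter_upwards with x
      have : ‖Complex.exp (-(x:ℂ) ^ 2 / 2)‖ = Real.exp (-(1/2) * x ^ 2) := by
        rw [Complex.norm_exp]
        congr 1
        have : -(x:ℂ) ^ 2 / 2 = ((-(1/2) * x ^ 2 : ℝ) : ℂ) := by push_cast; ring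
        rw [this, Complex.ofReal_re]
      rw [norm_mul, norm_pow, Complex.norm_real, Real.norm_eq_abs, this]
  have : (fun x : ℝ => Q.eval (x:ℂ) * Complex.exp (-(x:ℂ) ^ 2 / 2)) =
      fun x : ℝ => ∑ k ∈ Finset.range (Q.natDegree + 1),
        Q.coeff k * ((x:ℂ) ^ k * Complex.exp (-(x:ℂ) ^ 2 / 2)) := by
    funext x
    rw [Q.eval_eq_sum_range, Finset.sum_mul]
    exact Finset.sum_congr rfl fun k _ => by ring
  rw [this]
  exact integrable_finset_sum _ (fun k _ => (base k).const_mul _)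

lemma hasDerivAt_poly_gauss_real (Q : Polynomial ℂ) (x : ℝ) :
    HasDerivAt (fun t : ℝ => Q.eval (t:ℂ) * Complex.exp (-(t:ℂ) ^ 2 / 2))
      ((Q.derivative.eval (x:ℂ) - (x:ℂ) * Q.eval (x:ℂ)) * Complex.exp (-(x:ℂ) ^ 2 / 2)) x := by
  have h2 : HasDerivAt (fun w : ℂ => -w ^ 2 / 2) (-(x:ℂ)) (x:ℂ) := by
    have := ((hasDerivAt_pow 2 ((x:ℂ))).fun_neg.div_const 2)
    exact this.congr_deriv (by simp; ring)
  have hc : HasDerivAt (fun w : ℂ => Q.eval w * Complex.exp (-w ^ 2 / 2))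
      ((Q.derivative.eval (x:ℂ) - (x:ℂ) * Q.eval (x:ℂ)) * Complex.exp (-(x:ℂ) ^ 2 / 2)) (x:ℂ) := by
    have := (Q.hasDerivAt (x:ℂ)).mul h2.cexp
    exact this.congr_deriv (by ring)
  exact hc.comp_ofReal

lemma F_eq (f : ℝ → ℂ) (ξ : ℝ) :
    ∫ x : ℝ, Complex.exp (Complex.I * ξ * x) * f x = 𝓕 f (-ξ / (2 * π)) := by
  rw [Real.fourier_eq']
  congr 1
  funext x
  rw [smul_eq_mul]
  congr 2
  have hπ : (π : ℝ) ≠ 0 := Real.pi_ne_zero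
  have : (inner ℝ x (-ξ / (2 * π)) : ℝ) = x * (-ξ / (2 * π)) := Real.inner_apply _ _
  rw [this]
  have hπc : (π : ℂ) ≠ 0 := by exact_mod_cast hπ
  push_cast
  field_simp

lemma IBP (f : ℝ → ℂ) (hf : Integrable f) (hd : Differentiable ℝ f)
    (hf' : Integrable (deriv f)) (ξ : ℝ) :
    ∫ x : ℝ, Complex.exp (Complex.I * ξ * x) * deriv f x
      = (-(Complex.I * ξ)) * ∫ x : ℝ, Complex.exp (Complex.I * ξ * x) * f x := by
  rw [F_eq, F_eq, Real.fourier_deriv hf hd hf']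
  simp only [smul_eq_mul]
  congr 1
  have hπ : (π : ℂ) ≠ 0 := by exact_mod_cast Real.pi_ne_zero
  push_cast
  field_simp

lemma DUI (f : ℝ → ℂ) (hf : Integrable f) (hf' : Integrable (fun x : ℝ => x • f x)) (ξ : ℝ) :
    HasDerivAt (fun ξ : ℝ => ∫ x : ℝ, Complex.exp (Complex.I * ξ * x) * f x)
      (∫ x : ℝ, Complex.I * x * Complex.exp (Complex.I * ξ * x) * f x) ξ := by
  have hfun : (fun ξ : ℝ => ∫ x : ℝ, Complex.exp (Complex.I * ξ * x) * f x)
      = (𝓕 f) ∘ (fun ξ : ℝ => -ξ / (2 * π)) := by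
    funext η; exact F_eq f η
  have hg : HasDerivAt (fun ξ : ℝ => -ξ / (2 * π)) (-1 / (2 * π)) ξ := by
    simpa using ((hasDerivAt_id ξ).neg.div_const (2 * π))
  have H := (Real.hasDerivAt_fourier hf hf' (-ξ / (2 * π))).scomp ξ hg
  rw [← hfun] at H
  convert H using 1
  · rfl
  rw [Complex.real_smul, ← F_eq, ← integral_const_mul]
  congr 1
  funext x
  simp only [smul_eq_mul]
  have hπ : (π : ℂ) ≠ 0 := by exact_mod_cast Real.pi_ne_zero
  push_cast
  field_simp

lemma char_mul_integrable (ξ : ℝ) (Q : Polynomial ℂ) :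
    Integrable (fun x : ℝ => Complex.exp (Complex.I * ξ * x) *
      (Q.eval (x:ℂ) * Complex.exp (-(x:ℂ) ^ 2 / 2))) := by
  apply (integrable_poly_gauss Q).bdd_mul (c := 1)
  · exact Continuous.aestronglyMeasurable (by fun_prop)
  · refine ae_of_all _ (fun x => ?_)
    rw [Complex.norm_exp]
    simp [Complex.mul_re, Complex.mul_im]

lemma key (j : ℕ) (ξ : ℝ) :
    ∫ x : ℝ, Complex.exp (Complex.I * ξ * x) *
        ((HP j).eval (x:ℂ) * Complex.exp (-(x:ℂ) ^ 2 / 2))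
      = (Real.sqrt (2 * π) : ℂ) * Complex.I ^ j * (HP j).eval (ξ:ℂ)
          * Complex.exp (-(ξ:ℂ) ^ 2 / 2) := by
  induction j generalizing ξ with
  | zero =>
      have h := fourierIntegral_gaussian (b := (1/2 : ℂ)) (by norm_num) (ξ : ℂ)
      have hL : ∫ x : ℝ, Complex.exp (Complex.I * ξ * x) *
          ((HP 0).eval (x:ℂ) * Complex.exp (-(x:ℂ) ^ 2 / 2))
          = ∫ x : ℝ, Complex.exp (Complex.I * (ξ:ℂ) * x) *
            Complex.exp (-(1/2 : ℂ) * (x:ℂ) ^ 2) := by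
        congr 1; funext x
        simp only [HP, eval_one, one_mul]
        congr 2
        ring
      rw [hL, h]
      have hsqrt : ((π : ℂ) / (1/2 : ℂ)) ^ (1/2 : ℂ) = (Real.sqrt (2 * π) : ℂ) := by
        have h1 : ((π : ℂ) / (1/2 : ℂ)) = ((2 * π : ℝ) : ℂ) := by push_cast; ring
        have h2 : (0:ℝ) ≤ 2 * π := by positivity
        rw [h1, Real.sqrt_eq_rpow, Complex.ofReal_cpow h2]
        norm_num
      rw [hsqrt]
      simp only [HP, eval_one, pow_zero]
      have : -(ξ:ℂ) ^ 2 / (4 * (1/2 : ℂ)) = -(ξ:ℂ) ^ 2 / 2 := by ring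
      rw [this]
      ring
  | succ j ih =>
      set f : ℝ → ℂ := fun x => (HP j).eval (x:ℂ) * Complex.exp (-(x:ℂ) ^ 2 / 2) with hf_def
      have hfd : ∀ x : ℝ, HasDerivAt f
          (((HP j).derivative.eval (x:ℂ) - (x:ℂ) * (HP j).eval (x:ℂ)) *
            Complex.exp (-(x:ℂ) ^ 2 / 2)) x := fun x => hasDerivAt_poly_gauss_real _ x
      have hdiff : Differentiable ℝ f := fun x => (hfd x).differentiableAt
      have hderiv : deriv f = fun x : ℝ =>
          ((derivative (HP j) - X * HP j).eval (x:ℂ)) * Complex.exp (-(x:ℂ) ^ 2 / 2) := by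
        funext x; rw [(hfd x).deriv]; simp only [eval_sub, eval_mul, eval_X]
      have hint : Integrable f := integrable_poly_gauss _
      have hint' : Integrable (deriv f) := by rw [hderiv]; exact integrable_poly_gauss _
      have hxint : Integrable (fun x : ℝ => x • f x) := by
        have heq : (fun x : ℝ => x • f x) = fun x : ℝ =>
            ((X * HP j).eval (x:ℂ)) * Complex.exp (-(x:ℂ) ^ 2 / 2) := by
          funext x
          simp only [hf_def, Complex.real_smul, eval_mul, eval_X, mul_assoc]
        rw [heq]; exact integrable_poly_gauss _
      -- derivative under the integral sign, combined with the induction hypothesis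
      have hD := DUI f hint hxint ξ
      have hSg : (fun η : ℝ => ∫ x : ℝ, Complex.exp (Complex.I * η * x) * f x)
          = fun η : ℝ => ((Real.sqrt (2 * π) : ℂ) * Complex.I ^ j) *
              ((HP j).eval (η:ℂ) * Complex.exp (-(η:ℂ) ^ 2 / 2)) := by
        funext η; rw [hf_def]; rw [ih η]; ring
      rw [hSg] at hD
      have hg2 : HasDerivAt (fun η : ℝ => ((Real.sqrt (2 * π) : ℂ) * Complex.I ^ j) *
            ((HP j).eval (η:ℂ) * Complex.exp (-(η:ℂ) ^ 2 / 2)))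
          (((Real.sqrt (2 * π) : ℂ) * Complex.I ^ j) *
            (((HP j).derivative.eval (ξ:ℂ) - (ξ:ℂ) * (HP j).eval (ξ:ℂ)) *
              Complex.exp (-(ξ:ℂ) ^ 2 / 2))) ξ :=
        (hasDerivAt_poly_gauss_real (HP j) ξ).const_mul _
      have hA : (∫ x : ℝ, Complex.I * x * Complex.exp (Complex.I * ξ * x) * f x)
          = ((Real.sqrt (2 * π) : ℂ) * Complex.I ^ j) *
            (((HP j).derivative.eval (ξ:ℂ) - (ξ:ℂ) * (HP j).eval (ξ:ℂ)) *
              Complex.exp (-(ξ:ℂ) ^ 2 / 2)) := hD.unique hg2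
      -- the integral of the `x • f x` term
      have hu : (∫ x : ℝ, Complex.exp (Complex.I * ξ * x) *
            ((X * HP j).eval (x:ℂ) * Complex.exp (-(x:ℂ) ^ 2 / 2)))
          = (-Complex.I) * ∫ x : ℝ, Complex.I * x * Complex.exp (Complex.I * ξ * x) * f x := by
        rw [← integral_const_mul]
        congr 1; funext x
        simp only [hf_def, eval_mul, eval_X]
        linear_combination ((x:ℂ) * Complex.exp (Complex.I * ξ * x) * (HP j).eval (x:ℂ) *
          Complex.exp (-(x:ℂ) ^ 2 / 2)) * Complex.I_mul_I
      -- integration by parts term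
      have hB := IBP f hint hdiff hint' ξ
      have hS : (∫ x : ℝ, Complex.exp (Complex.I * ξ * x) * f x)
          = (Real.sqrt (2 * π) : ℂ) * Complex.I ^ j * (HP j).eval (ξ:ℂ)
            * Complex.exp (-(ξ:ℂ) ^ 2 / 2) := by rw [hf_def]; exact ih ξ
      rw [hS] at hB
      -- split the goal integral
      have hsplit : (fun x : ℝ => Complex.exp (Complex.I * ξ * x) *
            ((HP (j+1)).eval (x:ℂ) * Complex.exp (-(x:ℂ) ^ 2 / 2)))
          = fun x : ℝ => 2 * (Complex.exp (Complex.I * ξ * x) *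
              ((X * HP j).eval (x:ℂ) * Complex.exp (-(x:ℂ) ^ 2 / 2)))
            - (Complex.exp (Complex.I * ξ * x) * deriv f x
              + Complex.exp (Complex.I * ξ * x) *
                ((X * HP j).eval (x:ℂ) * Complex.exp (-(x:ℂ) ^ 2 / 2))) := by
        funext x
        rw [hderiv]
        simp only [HP, eval_sub, eval_mul, eval_X, eval_C]
        ring
      have hderivint : Integrable (fun x : ℝ => Complex.exp (Complex.I * ξ * x) * deriv f x) := by
        rw [hderiv]; exact char_mul_integrable ξ _
      have hadd : Integrable (fun x : ℝ => Complex.exp (Complex.I * ξ * x) * deriv f x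
          + Complex.exp (Complex.I * ξ * x) *
            ((X * HP j).eval (x:ℂ) * Complex.exp (-(x:ℂ) ^ 2 / 2))) :=
        hderivint.add (char_mul_integrable ξ (X * HP j))
      rw [hsplit, integral_sub ((char_mul_integrable ξ (X * HP j)).const_mul 2) hadd,
        integral_add hderivint (char_mul_integrable ξ (X * HP j)),
        integral_const_mul, hu, hA, hB]
      simp only [HP, eval_sub, eval_mul, eval_X, eval_C, pow_succ]
      ring

end aux

open Real Complex Polynomial FourierTransform in
/-- The Hermite function `x ↦ H_j(x) e^{-x²/2}` is a Fourier-transform eigenfunction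
with eigenvalue `i^j`. -/
theorem fourier_hermite (j : ℕ) (ξ : ℝ) :
    (1 / (Real.sqrt (2 * Real.pi) : ℂ)) *
      ∫ x : ℝ, Complex.exp (Complex.I * (ξ : ℂ) * (x : ℂ)) * physHermite j (x : ℂ) *
        Complex.exp (-(x : ℂ) ^ 2 / 2)
    = Complex.I ^ j * physHermite j (ξ : ℂ) * Complex.exp (-(ξ : ℂ) ^ 2 / 2) := by
  have hpe : ∀ z : ℂ, physHermite j z = (HP j).eval z := fun z => physHermite_eq j z
  have hL : (∫ x : ℝ, Complex.exp (Complex.I * (ξ : ℂ) * (x : ℂ)) * physHermite j (x : ℂ) *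
        Complex.exp (-(x : ℂ) ^ 2 / 2))
      = ∫ x : ℝ, Complex.exp (Complex.I * ξ * x) *
          ((HP j).eval (x:ℂ) * Complex.exp (-(x:ℂ) ^ 2 / 2)) := by
    congr 1; funext x; rw [hpe, mul_assoc]
  rw [hL, key j ξ, hpe]
  have hc : ((Real.sqrt (2 * π) : ℝ) : ℂ) ≠ 0 :=
    Complex.ofReal_ne_zero.mpr (ne_of_gt (Real.sqrt_pos.mpr (by positivity)))
  rw [one_div, show ((Real.sqrt (2 * π) : ℝ) : ℂ) * Complex.I ^ j * (HP j).eval (ξ:ℂ)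
      * Complex.exp (-(ξ:ℂ) ^ 2 / 2) = ((Real.sqrt (2 * π) : ℝ) : ℂ) *
      (Complex.I ^ j * (HP j).eval (ξ:ℂ) * Complex.exp (-(ξ:ℂ) ^ 2 / 2)) from by ring,
    ← mul_assoc, inv_mul_cancel₀ hc, one_mul]
end

section
/- Generating function for the physicists' Hermite polynomials: for all complex numbers x and z, the series Σ_{j=0}^∞ (H_j(x)/j!) z^j converges absolutely and equals e^{−z² + 2xz}. -/
open MeasureTheory

lemma physHermite_key (x : ℂ) (w : ℂ) :
    HasSum (fun j : ℕ => physHermite j x / (j.factorial : ℂ) * w ^ j)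
      (Complex.exp (-w ^ 2 + 2 * x * w)) := by
  have hf : Differentiable ℂ (fun w : ℂ => Complex.exp (-w ^ 2)) :=
    Complex.differentiable_exp.comp (differentiable_pow 2).neg
  have H := (Complex.hasSum_taylorSeries_of_entire hf x (x - w)).mul_left
    (Complex.exp (x ^ 2))
  have heq : Complex.exp (x ^ 2) * Complex.exp (-(x - w) ^ 2)
      = Complex.exp (-w ^ 2 + 2 * x * w) := by
    rw [← Complex.exp_add]; ring_nf
  rw [heq] at H
  convert H using 2 with j
  · exact rfl
  have h0 : (j.factorial : ℂ) ≠ 0 := Nat.cast_ne_zero.mpr j.factorial_ne_zero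
  have hnw : (x - w - x) ^ j = (-1 : ℂ) ^ j * w ^ j := by
    rw [show x - w - x = -w by ring]; rw [neg_pow]
  simp only [physHermite, smul_eq_mul, hnw]
  field_simp

/-- Generating function of the physicists' Hermite polynomials:
`Σ_j (H_j(x)/j!) z^j = e^{-z²+2xz}`, with absolute convergence. -/
theorem physHermite_generating (x z : ℂ) :
    Summable (fun j : ℕ => ‖physHermite j x / (j.factorial : ℂ) * z ^ j‖) ∧
    ∑' j : ℕ, physHermite j x / (j.factorial : ℂ) * z ^ j
      = Complex.exp (-z ^ 2 + 2 * x * z) := by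
  refine ⟨?_, (physHermite_key x z).tsum_eq⟩
  set r : ℝ := ‖z‖ + 1 with hr
  have hr0 : (0 : ℝ) < r := by positivity
  have hw := (physHermite_key x (r : ℂ)).summable
  have hbd : BddAbove (Set.range fun j : ℕ =>
      ‖physHermite j x / (j.factorial : ℂ) * (r : ℂ) ^ j‖) :=
    hw.tendsto_atTop_zero.norm.bddAbove_range
  obtain ⟨C, hC⟩ := hbd
  set q : ℝ := ‖z‖ / r with hq
  have hq0 : 0 ≤ q := by positivity
  have hq1 : q < 1 := by
    rw [hq, div_lt_one hr0]; simp [hr]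
  refine Summable.of_nonneg_of_le (fun j => norm_nonneg _) (fun j => ?_)
    ((summable_geometric_of_lt_one hq0 hq1).mul_left C)
  have hCj : ‖physHermite j x / (j.factorial : ℂ)‖ * r ^ j ≤ C := by
    have := hC (Set.mem_range_self j)
    simpa [norm_mul, norm_pow, Complex.norm_real, abs_of_pos hr0] using this
  have hz : ‖z‖ = q * r := by rw [hq, div_mul_cancel₀ _ hr0.ne']
  clear_value q r
  calc ‖physHermite j x / (j.factorial : ℂ) * z ^ j‖
      = ‖physHermite j x / (j.factorial : ℂ)‖ * (q * r) ^ j := by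
        rw [norm_mul, norm_pow, hz]
    _ = ‖physHermite j x / (j.factorial : ℂ)‖ * r ^ j * q ^ j := by ring
    _ ≤ C * q ^ j := by
        exact mul_le_mul_of_nonneg_right hCj (by positivity)
end

section
/- Real-line integral representation of the physicists' Hermite polynomials: for every natural number j and every real number x, H_j(x) = ((−2i)^j / √π) · ∫_ℝ e^{−(s − ix)²} s^j ds, where the integrand is the complex-valued function s ↦ e^{−s² + 2isx + x²} s^j and the integral converges absolutely. -/
open MeasureTheory

open Complex Real FourierTransform


lemma aux_int (n : ℕ) : Integrable (fun s : ℝ => |s| ^ n * Real.exp (-s ^ 2)) := by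
  have h := integrable_rpow_mul_exp_neg_mul_sq (b := 1) one_pos (s := (n : ℝ))
    (lt_of_lt_of_le neg_one_lt_zero (Nat.cast_nonneg n))
  simp only [Real.rpow_natCast, neg_mul, one_mul] at h
  refine h.abs.congr (Filter.EventuallyEq.of_eq ?_)
  funext s
  rw [abs_mul, _root_.abs_pow, _root_.abs_of_nonneg (Real.exp_pos _).le]

lemma aux_mom (n : ℕ) : Integrable (fun s : ℝ => (s : ℝ) ^ n • cexp (-(s:ℂ)^2)) := by
  refine (aux_int n).mono' ?_ ?_
  · apply Continuous.aestronglyMeasurable; fun_prop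
  · filter_upwards with s
    rw [norm_smul, Complex.norm_exp]
    simp [← Complex.ofReal_pow]

lemma aux_target_int (j : ℕ) (x : ℝ) :
    Integrable (fun s : ℝ =>
      Complex.exp (-((s : ℂ) - Complex.I * (x : ℂ)) ^ 2) * (s : ℂ) ^ j) := by
  refine (((aux_int j).const_mul (Real.exp (x^2))).mono' ?_ ?_)
  · apply Continuous.aestronglyMeasurable; fun_prop
  · filter_upwards with s
    rw [norm_mul, Complex.norm_exp]
    have : (-((s : ℂ) - Complex.I * (x : ℂ)) ^ 2).re = x^2 - s^2 := by
      simp [Complex.ext_iff]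
      ring_nf
      simp [← Complex.ofReal_pow]
      ring
    rw [this]
    simp only [norm_pow, Complex.norm_real, Real.norm_eq_abs]
    rw [Real.exp_sub, Real.exp_neg]
    apply le_of_eq
    ring

lemma aux_fourier : (𝓕 fun s : ℝ => cexp (-(s:ℂ)^2)) = fun t : ℝ =>
    ((Real.sqrt π : ℝ) : ℂ) * cexp (-(π:ℂ)^2 * t^2) := by
  funext t
  rw [Real.fourier_real_eq_integral_exp_smul]
  have : ∀ s : ℝ, cexp (↑(-2 * π * s * t) * I) • cexp (-(s:ℂ)^2)
      = cexp (I * (↑(-2 * π * t) : ℂ) * s) * cexp (-1 * (s:ℂ)^2) := by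
    intro s; push_cast; rw [smul_eq_mul]; ring_nf
  simp_rw [this]
  rw [fourierIntegral_gaussian (by norm_num) (↑(-2 * π * t) : ℂ)]
  congr 1
  · rw [div_one]
    rw [show (1/2 : ℂ) = ((1/2 : ℝ) : ℂ) by norm_num,
      ← Complex.ofReal_cpow Real.pi_pos.le]
    norm_num [Real.sqrt_eq_rpow]
  · push_cast; congr 1; field_simp; ring
lemma aux_iteratedDeriv_comp_ofReal (f : ℂ → ℂ) (hf : Differentiable ℂ f) (n : ℕ) (x : ℝ) :
    iteratedDeriv n (fun t : ℝ => f ↑t) x = iteratedDeriv n f ↑x := by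
  induction n generalizing f with
  | zero => simp
  | succ n ih =>
    rw [iteratedDeriv_succ', iteratedDeriv_succ']
    have hd : Differentiable ℂ (deriv f) :=
      (contDiff_infty_iff_deriv.mp (hf.contDiff (n := (⊤ : ℕ∞)))).2.differentiable
        (by simp)
    have : (fun t : ℝ => deriv f ↑t) = deriv (fun t : ℝ => f ↑t) := by
      funext t
      exact ((hf ↑t).hasDerivAt.comp_ofReal).deriv.symm
    rw [← this]
    exact ih (deriv f) hd

lemma aux_iteratedDeriv_const_mul {j : ℕ} (c : ℂ) {f : ℂ → ℂ} (hf : ContDiff ℂ j f) (z : ℂ) :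
    iteratedDeriv j (fun w => c * f w) z = c * iteratedDeriv j f z := by
  simp only [← iteratedDerivWithin_univ]
  exact iteratedDerivWithin_const_mul (Set.mem_univ z) uniqueDiffOn_univ c hf.contDiffWithinAt

-- evenness
lemma aux_even (j : ℕ) (x : ℂ) :
    iteratedDeriv j (fun w : ℂ => cexp (-w^2)) (-x)
      = (-1:ℂ)^j * iteratedDeriv j (fun w : ℂ => cexp (-w^2)) x := by
  have h := iteratedDeriv_comp_neg j (fun w : ℂ => cexp (-w^2)) (-x)
  have h2 : (fun w : ℂ => cexp (-(-w)^2)) = fun w : ℂ => cexp (-w^2) := by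
    funext w; ring_nf
  rw [h2, neg_neg, smul_eq_mul] at h
  exact h

/-- Real-line integral representation of the physicists' Hermite polynomials:
`H_j(x) = ((-2i)^j/√π) ∫_ℝ e^{-(s-ix)²} s^j ds`, the integral converging absolutely. -/
theorem physHermite_integral_repr (j : ℕ) (x : ℝ) :
    Integrable (fun s : ℝ =>
      Complex.exp (-((s : ℂ) - Complex.I * (x : ℂ)) ^ 2) * (s : ℂ) ^ j) ∧
    physHermite j (x : ℂ)
      = ((-2 * Complex.I) ^ j / (Real.sqrt Real.pi : ℂ)) *
          ∫ s : ℝ, Complex.exp (-((s : ℂ) - Complex.I * (x : ℂ)) ^ 2) * (s : ℂ) ^ j := by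
  refine ⟨aux_target_int j x, ?_⟩
  set G : ℂ → ℂ := fun w => cexp (-w^2) with hGdef
  have hGdiff : Differentiable ℂ G := (differentiable_pow 2).neg.cexp
  have hGcd : ContDiff ℂ j G := hGdiff.contDiff
  set t₀ : ℝ := -x / π with ht₀
  have hπ : (π : ℝ) ≠ 0 := Real.pi_ne_zero
  -- differentiation under the integral sign (Fourier side)
  have key := congrFun (Real.iteratedDeriv_fourier
    (f := fun s : ℝ => cexp (-(s:ℂ)^2)) (N := (j : ℕ∞)) (n := j)
    (fun n _ => aux_mom n) le_rfl) t₀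
  -- compute the left side of key
  rw [aux_fourier] at key
  set F : ℂ → ℂ := fun w => ((Real.sqrt π : ℝ) : ℂ) * G ((π:ℂ) * w) with hFdef
  have hFeq : (fun t : ℝ => ((Real.sqrt π : ℝ) : ℂ) * cexp (-(π:ℂ)^2 * (t:ℂ)^2))
      = fun t : ℝ => F ↑t := by
    funext t
    simp only [hFdef, hGdef]
    congr 1
    ring_nf
  rw [hFeq] at key
  have hFdiff : Differentiable ℂ F := by
    apply Differentiable.const_mul
    exact hGdiff.comp (differentiable_const _ |>.mul differentiable_id)
  rw [aux_iteratedDeriv_comp_ofReal F hFdiff j t₀, hFdef] at key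
  have hGπ : ContDiff ℂ j (fun w : ℂ => G ((π:ℂ) * w)) := by
    have : Differentiable ℂ (fun w : ℂ => G ((π:ℂ) * w)) :=
      hGdiff.comp ((differentiable_const _).mul differentiable_id)
    exact this.contDiff
  rw [aux_iteratedDeriv_const_mul ((Real.sqrt π : ℝ) : ℂ) hGπ] at key
  rw [show (fun w : ℂ => G ((π:ℂ) * w)) = fun w : ℂ => G ((π:ℂ) * w) from rfl,
    congrFun (iteratedDeriv_comp_const_mul hGcd ((π:ℂ))) (↑t₀ : ℂ)] at key
  have hπC : (π : ℂ) ≠ 0 := Complex.ofReal_ne_zero.mpr hπ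
  have hpt : (π : ℂ) * (t₀ : ℂ) = -(x : ℂ) := by
    rw [ht₀]; push_cast; field_simp
  rw [hpt, aux_even j (x:ℂ)] at key
  -- compute the right side of key
  have hRHS : 𝓕 (fun s : ℝ => ((-2 * ↑π * Complex.I * (s:ℂ)) ^ j) • cexp (-(s:ℂ)^2)) t₀
      = (-2 * (π:ℂ) * Complex.I) ^ j * cexp (-(x:ℂ)^2) *
        ∫ s : ℝ, Complex.exp (-((s : ℂ) - Complex.I * (x : ℂ)) ^ 2) * (s : ℂ) ^ j := by
    rw [Real.fourier_real_eq_integral_exp_smul, ← integral_const_mul]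
    congr 1
    funext s
    have hA : (-2 * π * s * t₀ : ℝ) = 2 * s * x := by rw [ht₀]; field_simp
    rw [smul_eq_mul, smul_eq_mul, hA, mul_pow]
    have hexp : cexp ((↑(2*s*x):ℂ) * Complex.I) * cexp (-(s:ℂ)^2)
        = cexp (-(x:ℂ)^2) * cexp (-((s:ℂ) - Complex.I*(x:ℂ))^2) := by
      rw [← Complex.exp_add, ← Complex.exp_add]
      congr 1
      push_cast
      linear_combination ((x:ℂ)^2) * Complex.I_sq
    linear_combination ((-2*(π:ℂ)*Complex.I)^j * (s:ℂ)^j) * hexp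
  rw [hRHS] at key
  -- wrap up
  unfold physHermite
  set D := iteratedDeriv j (fun w : ℂ => cexp (-w ^ 2)) (x:ℂ)
  set T := ∫ s : ℝ, Complex.exp (-((s : ℂ) - Complex.I * (x : ℂ)) ^ 2) * (s : ℂ) ^ j
  have hs : ((Real.sqrt π : ℝ) : ℂ) ≠ 0 :=
    Complex.ofReal_ne_zero.mpr (Real.sqrt_ne_zero'.mpr Real.pi_pos)
  have hEE : cexp ((x:ℂ)^2) * cexp (-(x:ℂ)^2) = 1 := by
    rw [← Complex.exp_add]; simp
  have hpow : (-2*(π:ℂ)*Complex.I)^j = (π:ℂ)^j * (-2*Complex.I)^j := by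
    rw [← mul_pow]; ring_nf
  have key2 : (π:ℂ)^j * (((Real.sqrt π : ℝ) : ℂ) * ((-1:ℂ)^j * D) * cexp ((x:ℂ)^2))
      = (π:ℂ)^j * ((-2*Complex.I)^j * T) := by
    rw [hpow] at key
    linear_combination cexp ((x:ℂ)^2) * key + ((π:ℂ)^j * (-2*Complex.I)^j * T) * hEE
  have key3 := mul_left_cancel₀ (pow_ne_zero j hπC) key2
  rw [div_mul_eq_mul_div, eq_div_iff hs]
  linear_combination key3
end

section
/- Bilinear Hermite (Mehler-type) identity: for all real numbers x and z, the series Σ_{j=0}^∞ H_j(x) H_j(z) / (j! · 2^{3j/2}) converges absolutely and equals √2 · e^{−z² + 2√2·xz − x²}. -/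
open MeasureTheory

namespace PH

noncomputable def fG : ℂ → ℂ := fun w => Complex.exp (-w ^ 2)

lemma physHermite_eq (j : ℕ) (z : ℂ) :
    physHermite j z = (-1 : ℂ) ^ j * Complex.exp (z ^ 2) * iteratedDeriv j fG z := rfl

lemma fG_diff : Differentiable ℂ fG := ((differentiable_pow 2).neg).cexp

lemma fG_contDiff : ContDiff ℂ ⊤ fG := fG_diff.contDiff

lemma iter_diff (n : ℕ) : Differentiable ℂ (iteratedDeriv n fG) := by
  apply fG_contDiff.differentiable_iteratedDeriv
  exact_mod_cast WithTop.coe_lt_top _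

lemma hasDerivAt_iter (n : ℕ) (z : ℂ) :
    HasDerivAt (iteratedDeriv n fG) (iteratedDeriv (n + 1) fG z) z := by
  rw [iteratedDeriv_succ]
  exact ((iter_diff n) z).hasDerivAt

/-- Generating function. -/
lemma hermite_hasSum (x t : ℂ) :
    HasSum (fun n : ℕ => physHermite n x * t ^ n / n.factorial)
      (Complex.exp (2 * x * t - t ^ 2)) := by
  have h := (Complex.hasSum_taylorSeries_of_entire fG_diff x (x - t)).mul_left
      (Complex.exp (x ^ 2))
  convert h using 1
  · rfl
  · funext n
    rw [physHermite_eq, smul_eq_mul, smul_eq_mul, sub_sub_cancel_left, neg_pow]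
    field_simp
    ring
  · show Complex.exp (2 * x * t - t ^ 2) = Complex.exp (x ^ 2) * Complex.exp (-(x - t) ^ 2)
    rw [← Complex.exp_add]
    congr 1
    ring


lemma iter_succ_apply (m : ℕ) (z : ℂ) :
    iteratedDeriv (m + 1) fG z = deriv (iteratedDeriv m fG) z := by
  rw [iteratedDeriv_succ]

lemma iter_one (z : ℂ) : iteratedDeriv 1 fG z = -2 * z * fG z := by
  rw [iteratedDeriv_one]
  have h1 : HasDerivAt (fun w : ℂ => -w ^ 2) (-(2 * z)) z := by
    simpa using (hasDerivAt_pow 2 z).fun_neg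
  have h2 := h1.cexp.deriv
  rw [show deriv fG z = deriv (fun w : ℂ => Complex.exp (-w ^ 2)) z from rfl, h2]
  show Complex.exp (-z ^ 2) * _ = -2 * z * Complex.exp (-z ^ 2)
  ring

lemma hasDerivAt_mul_iter (k : ℕ) (z : ℂ) :
    HasDerivAt (fun w => -2 * w * iteratedDeriv k fG w)
      (-2 * iteratedDeriv k fG z + -2 * z * iteratedDeriv (k + 1) fG z) z := by
  have h1 : HasDerivAt (fun w : ℂ => -2 * w) (-2) z := by
    simpa using (hasDerivAt_id z).const_mul (-2 : ℂ)
  simpa using h1.fun_mul (hasDerivAt_iter k z)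

lemma iter_rec (n : ℕ) (z : ℂ) :
    iteratedDeriv (n + 2) fG z
      = -2 * z * iteratedDeriv (n + 1) fG z - 2 * (n + 1) * iteratedDeriv n fG z := by
  induction n generalizing z with
  | zero =>
    rw [show (0 + 2 : ℕ) = (0 + 1) + 1 from rfl, iter_succ_apply (0 + 1) z]
    have e2 : iteratedDeriv (0 + 1) fG = fun w => -2 * w * iteratedDeriv 0 fG w := by
      funext w
      rw [show (0 + 1 : ℕ) = 1 from rfl, iter_one, iteratedDeriv_zero]
    have hd : deriv (iteratedDeriv (0 + 1) fG) z
        = -2 * iteratedDeriv 0 fG z + -2 * z * iteratedDeriv (0 + 1) fG z := by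
      conv_lhs => rw [e2]
      exact (hasDerivAt_mul_iter 0 z).deriv
    rw [hd]
    push_cast
    ring
  | succ n ih =>
    rw [show (n + 1 + 2 : ℕ) = (n + 2) + 1 from rfl, iter_succ_apply (n + 2) z]
    have e2 : iteratedDeriv (n + 2) fG = fun w =>
        -2 * w * iteratedDeriv (n + 1) fG w - 2 * ((n : ℂ) + 1) * iteratedDeriv n fG w := by
      funext w; rw [ih w]
    have hd : deriv (iteratedDeriv (n + 2) fG) z
        = -2 * iteratedDeriv (n + 1) fG z + -2 * z * iteratedDeriv (n + 1 + 1) fG z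
          - 2 * ((n : ℂ) + 1) * iteratedDeriv (n + 1) fG z := by
      conv_lhs => rw [e2]
      exact ((hasDerivAt_mul_iter (n + 1) z).sub
        ((hasDerivAt_iter n z).const_mul (2 * ((n : ℂ) + 1)))).deriv
    rw [hd]
    push_cast
    ring

lemma physHermite_zero (z : ℂ) : physHermite 0 z = 1 := by
  rw [physHermite_eq]
  simp [fG, ← Complex.exp_add]

lemma physHermite_one (z : ℂ) : physHermite 1 z = 2 * z := by
  rw [physHermite_eq, iter_one]
  have h : Complex.exp (z ^ 2) * Complex.exp (-z ^ 2) = 1 := by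
    rw [← Complex.exp_add]; simp
  show (-1 : ℂ) ^ 1 * Complex.exp (z ^ 2) * (-2 * z * Complex.exp (-z ^ 2)) = 2 * z
  calc (-1 : ℂ) ^ 1 * Complex.exp (z ^ 2) * (-2 * z * Complex.exp (-z ^ 2))
      = 2 * z * (Complex.exp (z ^ 2) * Complex.exp (-z ^ 2)) := by ring
    _ = 2 * z := by rw [h, mul_one]

lemma physHermite_rec (n : ℕ) (w : ℂ) :
    physHermite (n + 2) w
      = 2 * w * physHermite (n + 1) w - 2 * (n + 1) * physHermite n w := by
  simp only [physHermite_eq, iter_rec]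
  simp only [pow_add]
  push_cast
  ring


noncomputable def Pm (y : ℝ) : ℕ → ℝ
  | 0 => 1
  | 1 => 2 * y
  | (n + 2) => 2 * y * Pm y (n + 1) + 2 * (n + 1) * Pm y n

lemma Pm_nonneg (y : ℝ) (hy : 0 ≤ y) (n : ℕ) : 0 ≤ Pm y n := by
  have key : ∀ m, 0 ≤ Pm y m ∧ 0 ≤ Pm y (m + 1) := by
    intro m
    induction m with
    | zero => constructor <;> simp [Pm] <;> positivity
    | succ k ih =>
      refine ⟨ih.2, ?_⟩
      show 0 ≤ 2 * y * Pm y (k + 1) + 2 * (k + 1) * Pm y k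
      have h1 := ih.1; have h2 := ih.2
      positivity
  exact (key n).1

lemma Pm_complex (y : ℝ) (n : ℕ) :
    physHermite n (Complex.I * y) = Complex.I ^ n * (Pm y n : ℂ) := by
  have key : ∀ m, physHermite m (Complex.I * y) = Complex.I ^ m * (Pm y m : ℂ) ∧
      physHermite (m + 1) (Complex.I * y) = Complex.I ^ (m + 1) * (Pm y (m + 1) : ℂ) := by
    intro m
    induction m with
    | zero =>
      refine ⟨?_, ?_⟩
      · rw [physHermite_zero]; simp [Pm]
      · rw [physHermite_one]; show _ = Complex.I ^ 1 * ((2 * y : ℝ) : ℂ)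
        push_cast; ring
    | succ k ih =>
      refine ⟨ih.2, ?_⟩
      rw [show k + 1 + 1 = k + 2 from rfl, physHermite_rec, ih.1, ih.2]
      show _ = Complex.I ^ (k + 2) * ((2 * y * Pm y (k + 1) + 2 * (k + 1) * Pm y k : ℝ) : ℂ)
      have h2 : (Complex.I : ℂ) ^ (k + 2) = Complex.I ^ k * (-1) := by
        rw [pow_add, Complex.I_sq]
      have h1 : (Complex.I : ℂ) ^ (k + 1) = Complex.I ^ k * Complex.I := by
        rw [pow_add, pow_one]
      rw [h1, h2]
      push_cast
      have hII : (Complex.I : ℂ) * Complex.I = -1 := Complex.I_mul_I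
      calc 2 * (Complex.I * (y : ℂ)) * (Complex.I ^ k * Complex.I * (Pm y (k + 1) : ℂ))
            - 2 * ((k : ℂ) + 1) * (Complex.I ^ k * (Pm y k : ℂ))
          = (Complex.I * Complex.I) * (2 * (y : ℂ) * (Complex.I ^ k * (Pm y (k + 1) : ℂ)))
            - 2 * ((k : ℂ) + 1) * (Complex.I ^ k * (Pm y k : ℂ)) := by ring
        _ = _ := by rw [hII]; ring
  exact (key n).1

lemma norm_physHermite_le (x : ℝ) (n : ℕ) : ‖physHermite n (x : ℂ)‖ ≤ Pm |x| n := by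
  have key : ∀ m, ‖physHermite m (x : ℂ)‖ ≤ Pm |x| m ∧
      ‖physHermite (m + 1) (x : ℂ)‖ ≤ Pm |x| (m + 1) := by
    intro m
    induction m with
    | zero =>
      refine ⟨?_, ?_⟩
      · rw [physHermite_zero]; simp [Pm]
      · rw [physHermite_one]
        show ‖2 * (x : ℂ)‖ ≤ 2 * |x|
        rw [show (2 * (x : ℂ)) = ((2 * x : ℝ) : ℂ) by push_cast; ring, Complex.norm_real]
        rw [Real.norm_eq_abs, abs_mul]
        simp
    | succ k ih =>
      refine ⟨ih.2, ?_⟩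
      rw [show k + 1 + 1 = k + 2 from rfl, physHermite_rec]
      have hb := norm_sub_le (2 * (x : ℂ) * physHermite (k + 1) x)
        (2 * ((k : ℂ) + 1) * physHermite k x)
      have e1 : ‖2 * (x : ℂ) * physHermite (k + 1) x‖ = 2 * |x| * ‖physHermite (k + 1) x‖ := by
        rw [norm_mul, show (2 * (x : ℂ)) = ((2 * x : ℝ) : ℂ) by push_cast; ring,
          Complex.norm_real, Real.norm_eq_abs, abs_mul]
        simp
      have e2 : ‖2 * ((k : ℂ) + 1) * physHermite k x‖
          = 2 * ((k : ℝ) + 1) * ‖physHermite k x‖ := by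
        rw [norm_mul, show (2 * ((k : ℂ) + 1)) = ((2 * ((k : ℝ) + 1) : ℝ) : ℂ) by push_cast; ring,
          Complex.norm_real, Real.norm_eq_abs, abs_of_nonneg (by positivity)]
      rw [e1, e2] at hb
      refine hb.trans ?_
      show _ ≤ 2 * |x| * Pm |x| (k + 1) + 2 * ((k : ℝ) + 1) * Pm |x| k
      have h1 := ih.1; have h2 := ih.2
      have hx : (0:ℝ) ≤ |x| := abs_nonneg x
      gcongr
      all_goals first
      | exact norm_nonneg _
      | positivity
  exact (key n).1

lemma Pm_hasSum (y u : ℝ) :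
    HasSum (fun n : ℕ => Pm y n * u ^ n / n.factorial) (Real.exp (2 * y * u + u ^ 2)) := by
  rw [← Complex.hasSum_ofReal]
  have h := hermite_hasSum (Complex.I * y) (-(Complex.I) * u)
  convert h using 1
  · funext n
    have h1 : (-(Complex.I) * (u : ℂ)) ^ n = (-1 : ℂ) ^ n * Complex.I ^ n * (u : ℂ) ^ n := by
      rw [show -(Complex.I) * (u : ℂ) = (-1) * Complex.I * (u : ℂ) by ring, mul_pow, mul_pow]
    have h2 : (Complex.I : ℂ) ^ n * Complex.I ^ n = (-1) ^ n := by
      rw [← pow_add, ← two_mul, pow_mul, Complex.I_sq]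
    have h3 : ((-1 : ℂ)) ^ n * (-1) ^ n = 1 := by rw [← mul_pow]; norm_num
    rw [Pm_complex, h1]
    push_cast
    calc ((Pm y n : ℂ) * (u : ℂ) ^ n / (n.factorial : ℂ))
        = (Pm y n : ℂ) * (u : ℂ) ^ n * 1 / (n.factorial : ℂ) := by ring
      _ = (Pm y n : ℂ) * (u : ℂ) ^ n * ((-1) ^ n * (-1) ^ n) / (n.factorial : ℂ) := by rw [h3]
      _ = (Pm y n : ℂ) * (u : ℂ) ^ n * ((-1) ^ n * (Complex.I ^ n * Complex.I ^ n))
            / (n.factorial : ℂ) := by rw [h2]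
      _ = Complex.I ^ n * (Pm y n : ℂ) * ((-1) ^ n * Complex.I ^ n * (u : ℂ) ^ n)
            / (n.factorial : ℂ) := by ring
  · rw [Complex.ofReal_exp]
    congr 1
    push_cast
    ring_nf
    rw [Complex.I_sq]
    ring


noncomputable def Jn (n : ℕ) (z : ℂ) : ℂ :=
  ∫ s : ℝ, (2 * Complex.I * s) ^ n * Complex.exp (-(s : ℂ) ^ 2 + 2 * Complex.I * s * z)

lemma integ_aux (n : ℕ) (K : ℝ) :
    Integrable (fun s : ℝ => |s| ^ n * Real.exp (-s ^ 2 + K * |s|)) := by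
  have hn : (-1 : ℝ) < (n : ℝ) := lt_of_lt_of_le (by norm_num) (Nat.cast_nonneg n)
  have hbase := ((integrable_rpow_mul_exp_neg_mul_sq (by norm_num : (0:ℝ) < 1/2) hn).abs).const_mul
    (Real.exp (K ^ 2 / 2))
  apply hbase.mono'
  · apply Continuous.aestronglyMeasurable
    exact (continuous_abs.pow n).mul
      (((continuous_pow 2).neg.add (continuous_const.mul continuous_abs)).rexp)
  · filter_upwards with s
    have h1 : ‖|s| ^ n * Real.exp (-s ^ 2 + K * |s|)‖ = |s| ^ n * Real.exp (-s ^ 2 + K * |s|) := by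
      rw [Real.norm_eq_abs, abs_of_nonneg (by positivity)]
    have h2 : |s ^ ((n : ℝ)) * Real.exp (-(1/2) * s ^ 2)|
        = |s| ^ n * Real.exp (-(1/2) * s ^ 2) := by
      rw [Real.rpow_natCast, abs_mul, abs_pow, abs_of_nonneg (Real.exp_pos _).le]
    rw [h1, h2]
    have h3 : Real.exp (-s ^ 2 + K * |s|) ≤ Real.exp (K ^ 2 / 2) * Real.exp (-(1/2) * s ^ 2) := by
      rw [← Real.exp_add]
      apply Real.exp_le_exp.mpr
      nlinarith [sq_nonneg (|s| - K), sq_abs s]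
    calc |s| ^ n * Real.exp (-s ^ 2 + K * |s|)
        ≤ |s| ^ n * (Real.exp (K ^ 2 / 2) * Real.exp (-(1/2) * s ^ 2)) := by
          exact mul_le_mul_of_nonneg_left h3 (by positivity)
      _ = Real.exp (K ^ 2 / 2) * (|s| ^ n * Real.exp (-(1/2) * s ^ 2)) := by ring

lemma norm_Jn_integrand (n : ℕ) (z : ℂ) (s : ℝ) :
    ‖(2 * Complex.I * (s : ℂ)) ^ n * Complex.exp (-(s : ℂ) ^ 2 + 2 * Complex.I * s * z)‖
      = 2 ^ n * |s| ^ n * Real.exp (-s ^ 2 - 2 * s * z.im) := by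
  have e1 : ‖2 * Complex.I * (s : ℂ)‖ = 2 * |s| := by
    rw [norm_mul, norm_mul]
    simp [Complex.norm_real]
  have e2 : (-(s : ℂ) ^ 2 + 2 * Complex.I * s * z).re = -s ^ 2 - 2 * s * z.im := by
    simp [Complex.add_re, Complex.mul_re, Complex.mul_im, ← Complex.ofReal_pow]
    ring
  rw [norm_mul, norm_pow, e1, Complex.norm_exp, e2, mul_pow]

lemma Jn_integrand_integrable (n : ℕ) (z : ℂ) :
    Integrable (fun s : ℝ =>
      (2 * Complex.I * s) ^ n * Complex.exp (-(s : ℂ) ^ 2 + 2 * Complex.I * s * z)) := by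
  apply ((integ_aux n (2 * |z.im|)).const_mul (2 ^ n)).mono'
  · apply Continuous.aestronglyMeasurable
    apply Continuous.mul
    · exact (Continuous.mul continuous_const Complex.continuous_ofReal).pow n
    · apply Continuous.cexp
      apply Continuous.add
      · exact (Complex.continuous_ofReal.pow 2).neg
      · exact (continuous_const.mul Complex.continuous_ofReal).mul continuous_const
  · filter_upwards with s
    rw [norm_Jn_integrand]
    have h4 : -s ^ 2 - 2 * s * z.im ≤ -s ^ 2 + 2 * |z.im| * |s| := by
      have : -(2 * s * z.im) ≤ |2 * s * z.im| := neg_le_abs _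
      rw [abs_mul, abs_mul, abs_two] at this
      nlinarith
    calc 2 ^ n * |s| ^ n * Real.exp (-s ^ 2 - 2 * s * z.im)
        ≤ 2 ^ n * |s| ^ n * Real.exp (-s ^ 2 + 2 * |z.im| * |s|) := by
          exact mul_le_mul_of_nonneg_left (Real.exp_le_exp.mpr h4) (by positivity)
      _ = 2 ^ n * (|s| ^ n * Real.exp (-s ^ 2 + 2 * |z.im| * |s|)) := by ring

lemma Jn_zero (z : ℂ) : Jn 0 z = (Real.sqrt Real.pi : ℂ) * Complex.exp (-z ^ 2) := by
  have h := fourierIntegral_gaussian (b := (1 : ℂ)) (by norm_num) (2 * z)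
  unfold Jn
  rw [show (fun s : ℝ => (2 * Complex.I * (s : ℂ)) ^ 0
        * Complex.exp (-(s : ℂ) ^ 2 + 2 * Complex.I * s * z))
      = fun s : ℝ => Complex.exp (Complex.I * (2 * z) * s) * Complex.exp (-1 * (s : ℂ) ^ 2) from
    funext fun s => by rw [pow_zero, one_mul, ← Complex.exp_add]; congr 1; ring]
  rw [h]
  congr 1
  · rw [show ((Real.pi : ℂ) / 1) = ((Real.pi : ℝ) : ℂ) by norm_num,
      show ((1/2 : ℂ)) = (((1/2 : ℝ) : ℝ) : ℂ) by norm_num,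
      ← Complex.ofReal_cpow Real.pi_nonneg, Real.sqrt_eq_rpow]
  · congr 1
    ring

lemma Jn_hasDerivAt (n : ℕ) (z₀ : ℂ) : HasDerivAt (Jn n) (Jn (n + 1) z₀) z₀ := by
  have key := hasDerivAt_integral_of_dominated_loc_of_deriv_le (μ := volume)
    (F := fun (z : ℂ) (s : ℝ) =>
      (2 * Complex.I * s) ^ n * Complex.exp (-(s : ℂ) ^ 2 + 2 * Complex.I * s * z))
    (F' := fun (z : ℂ) (s : ℝ) =>
      (2 * Complex.I * s) ^ (n + 1) * Complex.exp (-(s : ℂ) ^ 2 + 2 * Complex.I * s * z))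
    (x₀ := z₀)
    (bound := fun s => 2 ^ (n + 1) * (|s| ^ (n + 1) * Real.exp (-s ^ 2 + 2 * (|z₀.im| + 1) * |s|)))
    (s := Metric.ball z₀ 1) (Metric.ball_mem_nhds z₀ one_pos)
    (Filter.Eventually.of_forall fun z => (Jn_integrand_integrable n z).aestronglyMeasurable)
    (Jn_integrand_integrable n z₀)
    (Jn_integrand_integrable (n + 1) z₀).aestronglyMeasurable
    ?_ ((integ_aux (n + 1) (2 * (|z₀.im| + 1))).const_mul _) ?_
  · exact key.2
  · apply MeasureTheory.ae_of_all
    intro s z hz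
    rw [norm_Jn_integrand]
    have him : |z.im| ≤ |z₀.im| + 1 := by
      have h1 : |z.im - z₀.im| ≤ ‖z - z₀‖ := by
        simpa using Complex.abs_im_le_norm (z - z₀)
      have h2 : ‖z - z₀‖ ≤ 1 := by
        rw [← Complex.dist_eq]
        exact le_of_lt (Metric.mem_ball.mp hz)
      have h3 : |z.im| ≤ |z₀.im| + |z.im - z₀.im| := by
        have := abs_sub_abs_le_abs_sub z.im z₀.im
        linarith [abs_sub_comm z.im z₀.im ▸ this]
      linarith
    have h4 : -s ^ 2 - 2 * s * z.im ≤ -s ^ 2 + 2 * (|z₀.im| + 1) * |s| := by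
      have h5 : -(2 * s * z.im) ≤ |2 * s * z.im| := neg_le_abs _
      rw [abs_mul, abs_mul, abs_two] at h5
      nlinarith [abs_nonneg s, abs_nonneg z.im]
    calc 2 ^ (n + 1) * |s| ^ (n + 1) * Real.exp (-s ^ 2 - 2 * s * z.im)
        ≤ 2 ^ (n + 1) * |s| ^ (n + 1) * Real.exp (-s ^ 2 + 2 * (|z₀.im| + 1) * |s|) := by
          exact mul_le_mul_of_nonneg_left (Real.exp_le_exp.mpr h4) (by positivity)
      _ = 2 ^ (n + 1) * (|s| ^ (n + 1) * Real.exp (-s ^ 2 + 2 * (|z₀.im| + 1) * |s|)) := by ring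
  · apply MeasureTheory.ae_of_all
    intro s z hz
    have h1 : HasDerivAt (fun z : ℂ => -(s : ℂ) ^ 2 + 2 * Complex.I * s * z)
        (2 * Complex.I * s) z := by
      simpa using ((hasDerivAt_id z).const_mul (2 * Complex.I * (s : ℂ))).const_add (-(s : ℂ) ^ 2)
    have h2 := h1.cexp.const_mul ((2 * Complex.I * (s : ℂ)) ^ n)
    convert h2 using 1
    · rfl
    rw [pow_succ]
    ring

lemma Jn_rep (n : ℕ) (z : ℂ) : iteratedDeriv n fG z = Jn n z / (Real.sqrt Real.pi : ℂ) := by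
  have hpi : ((Real.sqrt Real.pi : ℝ) : ℂ) ≠ 0 := by
    rw [Complex.ofReal_ne_zero]
    positivity
  induction n generalizing z with
  | zero =>
    rw [iteratedDeriv_zero, Jn_zero, mul_comm, mul_div_assoc, div_self hpi, mul_one]
    rfl
  | succ n ih =>
    rw [iter_succ_apply n z]
    have e : iteratedDeriv n fG = fun w => Jn n w / (Real.sqrt Real.pi : ℂ) := funext ih
    rw [e, ((Jn_hasDerivAt n z).div_const ((Real.sqrt Real.pi : ℝ) : ℂ)).deriv]


lemma hr2c : (((Real.sqrt 2 : ℝ)) : ℂ) ^ 2 = 2 := by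
  rw [← Complex.ofReal_pow, Real.sq_sqrt (by norm_num : (0:ℝ) ≤ 2)]
  norm_num

lemma hr2c0 : (((Real.sqrt 2 : ℝ)) : ℂ) ≠ 0 := by
  rw [Complex.ofReal_ne_zero]
  positivity

noncomputable def gfun (x z : ℝ) (n : ℕ) (s : ℝ) : ℂ :=
  physHermite n (x : ℂ) * (-(Complex.I) * s * ((Real.sqrt 2 : ℝ) : ℂ) / 2) ^ n / n.factorial *
    Complex.exp (-(s : ℂ) ^ 2 + 2 * Complex.I * s * z)

lemma norm_gfun (x z : ℝ) (n : ℕ) (s : ℝ) :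
    ‖gfun x z n s‖ = ‖physHermite n (x : ℂ)‖ * (|s| * Real.sqrt 2 / 2) ^ n / n.factorial
      * Real.exp (-s ^ 2) := by
  unfold gfun
  rw [norm_mul, norm_div, norm_mul, norm_pow]
  have e1 : ‖-(Complex.I) * (s : ℂ) * ((Real.sqrt 2 : ℝ) : ℂ) / 2‖ = |s| * Real.sqrt 2 / 2 := by
    rw [norm_div, norm_mul, norm_mul]
    simp [Complex.norm_real, abs_of_nonneg (Real.sqrt_nonneg 2)]
  have e2 : ‖Complex.exp (-(s : ℂ) ^ 2 + 2 * Complex.I * s * (z : ℂ))‖ = Real.exp (-s ^ 2) := by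
    rw [Complex.norm_exp]
    congr 1
    simp [Complex.add_re, Complex.mul_re, Complex.mul_im, ← Complex.ofReal_pow]
  have e3 : ‖((n.factorial : ℕ) : ℂ)‖ = (n.factorial : ℝ) := by
    simp
  rw [e1, e2, e3]

lemma gfun_integrable (x z : ℝ) (n : ℕ) : Integrable (gfun x z n) := by
  have hb := (integ_aux n 0).const_mul
    (‖physHermite n (x : ℂ)‖ * (Real.sqrt 2 / 2) ^ n / n.factorial)
  apply hb.mono'
  · unfold gfun
    apply Continuous.aestronglyMeasurable
    apply Continuous.mul
    · apply Continuous.div_const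
      apply Continuous.mul continuous_const
      exact (((continuous_const.mul Complex.continuous_ofReal).mul
        continuous_const).div_const 2).pow n
    · apply Continuous.cexp
      exact ((Complex.continuous_ofReal.pow 2).neg.add
        (((continuous_const.mul Complex.continuous_ofReal)).mul continuous_const))
  · filter_upwards with s
    refine le_of_eq ?_
    rw [norm_gfun, zero_mul, add_zero]
    ring


lemma integ_aux2 (K : ℝ) :
    Integrable (fun s : ℝ => Real.exp (-(1/2) * s ^ 2 + K * |s|)) := by
  have hbase := (integrable_exp_neg_mul_sq (by norm_num : (0:ℝ) < 1/4)).const_mul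
    (Real.exp (K ^ 2))
  apply hbase.mono'
  · apply Continuous.aestronglyMeasurable
    exact ((continuous_const.mul (continuous_pow 2)).add (continuous_const.mul continuous_abs)).rexp
  · filter_upwards with s
    rw [Real.norm_eq_abs, abs_of_nonneg (Real.exp_pos _).le, ← Real.exp_add]
    apply Real.exp_le_exp.mpr
    nlinarith [sq_nonneg (|s| / 2 - K), sq_abs s]

lemma gfun_sum_norm_le (x z : ℝ) (N : ℕ) (s : ℝ) :
    ∑ n ∈ Finset.range N, ‖gfun x z n s‖
      ≤ Real.exp (-(1/2) * s ^ 2 + (Real.sqrt 2 * |x|) * |s|) := by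
  set u : ℝ := |s| * Real.sqrt 2 / 2 with hu
  have hu0 : 0 ≤ u := by positivity
  have hsum := Pm_hasSum |x| u
  have step1 : ∑ n ∈ Finset.range N, ‖gfun x z n s‖
      ≤ (∑ n ∈ Finset.range N, Pm |x| n * u ^ n / n.factorial) * Real.exp (-s ^ 2) := by
    rw [Finset.sum_mul]
    apply Finset.sum_le_sum
    intro n _
    rw [norm_gfun, ← hu]
    gcongr
    exact norm_physHermite_le x n
  refine step1.trans ?_
  have step2 : (∑ n ∈ Finset.range N, Pm |x| n * u ^ n / n.factorial)
      ≤ Real.exp (2 * |x| * u + u ^ 2) :=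
    sum_le_hasSum (Finset.range N)
      (fun i _ => by have := Pm_nonneg |x| (abs_nonneg x) i; positivity) hsum
  have step3 : (∑ n ∈ Finset.range N, Pm |x| n * u ^ n / n.factorial) * Real.exp (-s ^ 2)
      ≤ Real.exp (2 * |x| * u + u ^ 2) * Real.exp (-s ^ 2) :=
    mul_le_mul_of_nonneg_right step2 (Real.exp_pos _).le
  refine step3.trans (le_of_eq ?_)
  rw [← Real.exp_add]
  congr 1
  have h2 : Real.sqrt 2 ^ 2 = (2:ℝ) := Real.sq_sqrt (by norm_num)
  rw [hu]
  linear_combination (Real.sqrt 2 ^ 2 / 4) * (sq_abs s) + (s ^ 2 / 4) * h2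


lemma gfun_summable (x z : ℝ) : Summable (fun n : ℕ => ∫ s : ℝ, ‖gfun x z n s‖) := by
  apply summable_of_sum_range_le
    (c := ∫ s : ℝ, Real.exp (-(1/2) * s ^ 2 + (Real.sqrt 2 * |x|) * |s|))
  · intro n
    exact integral_nonneg fun s => norm_nonneg _
  · intro N
    rw [← integral_finset_sum _ (fun i _ => (gfun_integrable x z i).norm)]
    exact integral_mono (integrable_finset_sum _ (fun i _ => (gfun_integrable x z i).norm))
      (integ_aux2 _) (fun s => gfun_sum_norm_le x z N s)

lemma gfun_hasSum (x z s : ℝ) :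
    HasSum (fun n => gfun x z n s)
      (Complex.exp (-(1/2 : ℂ) * (s : ℂ) ^ 2
        + Complex.I * (2 * (z : ℂ) - ((Real.sqrt 2 : ℝ) : ℂ) * (x : ℂ)) * (s : ℂ))) := by
  have h := (hermite_hasSum (x : ℂ)
      (-(Complex.I) * (s : ℂ) * ((Real.sqrt 2 : ℝ) : ℂ) / 2)).mul_right
    (Complex.exp (-(s : ℂ) ^ 2 + 2 * Complex.I * (s : ℂ) * (z : ℂ)))
  convert h using 1
  · rfl
  · rfl
  rw [← Complex.exp_add]
  congr 1
  linear_combination ((s : ℂ) ^ 2 * ((Real.sqrt 2 : ℝ) : ℂ) ^ 2 / 4) * Complex.I_sq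
    + (-(s : ℂ) ^ 2 / 4) * hr2c

lemma Ez_D (n : ℕ) (z : ℂ) :
    Complex.exp (z ^ 2) * iteratedDeriv n fG z = (-1 : ℂ) ^ n * physHermite n z := by
  rw [physHermite_eq, ← mul_assoc, ← mul_assoc, ← mul_pow]
  norm_num

lemma hr4 : (((Real.sqrt 2 : ℝ)) : ℂ) ^ 4 = 4 := by
  rw [show (4 : ℕ) = 2 * 2 by norm_num, pow_mul, hr2c]
  norm_num

lemma gfun_integral_eq (x z : ℝ) (n : ℕ) :
    physHermite n (x : ℂ) * physHermite n (z : ℂ)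
        / ((n.factorial : ℂ) * (((Real.sqrt 2 : ℝ)) : ℂ) ^ (3 * n))
      = (Complex.exp ((z : ℂ) ^ 2) / ((Real.sqrt Real.pi : ℝ) : ℂ)) * ∫ s : ℝ, gfun x z n s := by
  have hfac : ((n.factorial : ℕ) : ℂ) ≠ 0 := Nat.cast_ne_zero.mpr n.factorial_ne_zero
  have hpi : ((Real.sqrt Real.pi : ℝ) : ℂ) ≠ 0 := by
    rw [Complex.ofReal_ne_zero]; positivity
  have e : gfun x z n = fun s : ℝ =>
      (physHermite n (x : ℂ) * (-(((Real.sqrt 2 : ℝ)) : ℂ) / 4) ^ n / n.factorial) *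
        ((2 * Complex.I * (s : ℂ)) ^ n * Complex.exp (-(s : ℂ) ^ 2 + 2 * Complex.I * s * z)) := by
    funext s
    unfold gfun
    rw [show (-(Complex.I) * (s : ℂ) * (((Real.sqrt 2 : ℝ)) : ℂ) / 2)
        = (-(((Real.sqrt 2 : ℝ)) : ℂ) / 4) * (2 * Complex.I * (s : ℂ)) by ring, mul_pow]
    ring
  simp only [e]
  rw [MeasureTheory.integral_const_mul]
  have hJ : (∫ s : ℝ, (2 * Complex.I * (s : ℂ)) ^ n
      * Complex.exp (-(s : ℂ) ^ 2 + 2 * Complex.I * s * z)) = Jn n (z : ℂ) := rfl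
  rw [hJ]
  have hJrep : Jn n (z : ℂ) = ((Real.sqrt Real.pi : ℝ) : ℂ) * iteratedDeriv n fG (z : ℂ) := by
    rw [Jn_rep n (z : ℂ)]
    field_simp
  rw [hJrep]
  have hneg : (-(((Real.sqrt 2 : ℝ)) : ℂ) / 4) ^ n
      = (-1 : ℂ) ^ n * ((((Real.sqrt 2 : ℝ)) : ℂ) / 4) ^ n := by
    rw [neg_div, neg_pow]
  have h11 : (-1 : ℂ) ^ n * (-1 : ℂ) ^ n = 1 := by
    rw [← mul_pow]; norm_num
  have hED := Ez_D n (z : ℂ)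
  rw [hneg]
  have h4n : (((Real.sqrt 2 : ℝ)) : ℂ) ^ (3 * n) * (((Real.sqrt 2 : ℝ)) : ℂ) ^ n
      = (4 : ℂ) ^ n := by
    rw [← pow_add, show 3 * n + n = 4 * n by ring, pow_mul, hr4]
  have hR : (((Real.sqrt 2 : ℝ)) : ℂ) ^ (3 * n) ≠ 0 := pow_ne_zero _ hr2c0
  have hq : ((((Real.sqrt 2 : ℝ)) : ℂ) / 4) ^ n = 1 / (((Real.sqrt 2 : ℝ)) : ℂ) ^ (3 * n) := by
    rw [div_pow, ← h4n]
    field_simp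
  rw [hq]
  have hre : Complex.exp ((z : ℂ) ^ 2) / ((Real.sqrt Real.pi : ℝ) : ℂ) *
      (physHermite n (x : ℂ) * ((-1 : ℂ) ^ n * (1 / (((Real.sqrt 2 : ℝ)) : ℂ) ^ (3 * n)))
        / (n.factorial : ℂ) * (((Real.sqrt Real.pi : ℝ) : ℂ) * iteratedDeriv n fG (z : ℂ)))
      = physHermite n (x : ℂ) * ((-1 : ℂ) ^ n * (Complex.exp ((z : ℂ) ^ 2) * iteratedDeriv n fG (z : ℂ)))
        / ((n.factorial : ℂ) * (((Real.sqrt 2 : ℝ)) : ℂ) ^ (3 * n))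
        * (((Real.sqrt Real.pi : ℝ) : ℂ) / ((Real.sqrt Real.pi : ℝ) : ℂ)) := by ring
  rw [hre, hED, div_self hpi, mul_one]
  linear_combination (-(physHermite n (x : ℂ) * physHermite n (z : ℂ)
    / ((n.factorial : ℂ) * (((Real.sqrt 2 : ℝ)) : ℂ) ^ (3 * n)))) * h11


lemma integral_total (x z : ℝ) :
    (∫ s : ℝ, Complex.exp (-(1/2 : ℂ) * (s : ℂ) ^ 2
        + Complex.I * (2 * (z : ℂ) - ((Real.sqrt 2 : ℝ) : ℂ) * (x : ℂ)) * (s : ℂ)))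
      = ((Real.sqrt (2 * Real.pi) : ℝ) : ℂ)
        * Complex.exp (-(2 * (z : ℂ) - ((Real.sqrt 2 : ℝ) : ℂ) * (x : ℂ)) ^ 2 / 2) := by
  set T : ℂ := 2 * (z : ℂ) - ((Real.sqrt 2 : ℝ) : ℂ) * (x : ℂ) with hT
  have hre : (0 : ℝ) < (1/2 : ℂ).re := by norm_num
  have h := fourierIntegral_gaussian hre T
  have e : (fun s : ℝ => Complex.exp (-(1/2 : ℂ) * (s : ℂ) ^ 2 + Complex.I * T * (s : ℂ)))
      = fun s : ℝ => Complex.exp (Complex.I * T * (s : ℂ))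
        * Complex.exp (-(1/2 : ℂ) * (s : ℂ) ^ 2) := by
    funext s
    rw [← Complex.exp_add]
    congr 1
    ring
  rw [e, h]
  congr 1
  · rw [show ((Real.pi : ℂ) / (1/2 : ℂ)) = (((2 * Real.pi : ℝ)) : ℂ) by push_cast; ring,
      show ((1/2 : ℂ)) = (((1/2 : ℝ) : ℝ) : ℂ) by norm_num,
      ← Complex.ofReal_cpow (by positivity), Real.sqrt_eq_rpow]
  · congr 1
    ring

end PH

/-- Bilinear (Mehler-type) Hermite identity:
`Σ_j H_j(x) H_j(z) / (j! 2^{3j/2}) = √2 e^{-z² + 2√2 xz - x²}`, with absolute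
convergence (here `2^{3j/2} = (√2)^{3j}`). -/
theorem physHermite_bilinear (x z : ℝ) :
    Summable (fun j : ℕ =>
      ‖physHermite j (x : ℂ) * physHermite j (z : ℂ) /
          ((j.factorial : ℂ) * ((Real.sqrt 2 : ℝ) : ℂ) ^ (3 * j))‖) ∧
    ∑' j : ℕ, physHermite j (x : ℂ) * physHermite j (z : ℂ) /
        ((j.factorial : ℂ) * ((Real.sqrt 2 : ℝ) : ℂ) ^ (3 * j))
      = (Real.sqrt 2 : ℂ) *
          Complex.exp (-(z : ℂ) ^ 2 + 2 * (Real.sqrt 2 : ℂ) * (x : ℂ) * (z : ℂ) - (x : ℂ) ^ 2) := by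
  classical
  set Cc : ℂ := Complex.exp ((z : ℂ) ^ 2) / ((Real.sqrt Real.pi : ℝ) : ℂ) with hCc
  set T : ℂ := 2 * (z : ℂ) - ((Real.sqrt 2 : ℝ) : ℂ) * (x : ℂ) with hT
  have hpi : ((Real.sqrt Real.pi : ℝ) : ℂ) ≠ 0 := by
    rw [Complex.ofReal_ne_zero]; positivity
  have hint : ∀ n : ℕ, Integrable (PH.gfun x z n) := PH.gfun_integrable x z
  have hsumint := PH.gfun_summable x z
  have key := MeasureTheory.hasSum_integral_of_summable_integral_norm (μ := volume)
    hint hsumint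
  have key2 := key.mul_left Cc
  have keyfun : (fun n : ℕ => Cc * ∫ s : ℝ, PH.gfun x z n s)
      = fun n : ℕ => physHermite n (x : ℂ) * physHermite n (z : ℂ) /
          ((n.factorial : ℂ) * ((Real.sqrt 2 : ℝ) : ℂ) ^ (3 * n)) :=
    funext fun n => (PH.gfun_integral_eq x z n).symm
  rw [keyfun] at key2
  have h1 : ∀ s : ℝ, (∑' n : ℕ, PH.gfun x z n s)
      = Complex.exp (-(1/2 : ℂ) * (s : ℂ) ^ 2 + Complex.I * T * (s : ℂ)) := fun s =>
    (PH.gfun_hasSum x z s).tsum_eq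
  have hvalue : (∫ s : ℝ, ∑' n : ℕ, PH.gfun x z n s)
      = ((Real.sqrt (2 * Real.pi) : ℝ) : ℂ) * Complex.exp (-T ^ 2 / 2) := by
    calc (∫ s : ℝ, ∑' n : ℕ, PH.gfun x z n s)
        = ∫ s : ℝ, Complex.exp (-(1/2 : ℂ) * (s : ℂ) ^ 2 + Complex.I * T * (s : ℂ)) := by
          simp only [h1]
      _ = _ := PH.integral_total x z
  rw [hvalue] at key2
  have hfinal : Cc * (((Real.sqrt (2 * Real.pi) : ℝ) : ℂ) * Complex.exp (-T ^ 2 / 2))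
      = (Real.sqrt 2 : ℂ) *
          Complex.exp (-(z : ℂ) ^ 2 + 2 * (Real.sqrt 2 : ℂ) * (x : ℂ) * (z : ℂ) - (x : ℂ) ^ 2) := by
    have hs2 : Real.sqrt (2 * Real.pi) = Real.sqrt 2 * Real.sqrt Real.pi :=
      Real.sqrt_mul (by norm_num) _
    rw [hs2, hCc]
    calc Complex.exp ((z : ℂ) ^ 2) / ((Real.sqrt Real.pi : ℝ) : ℂ)
          * ((((Real.sqrt 2 * Real.sqrt Real.pi : ℝ)) : ℂ) * Complex.exp (-T ^ 2 / 2))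
        = ((Real.sqrt 2 : ℝ) : ℂ) * (Complex.exp ((z : ℂ) ^ 2) * Complex.exp (-T ^ 2 / 2))
            * (((Real.sqrt Real.pi : ℝ) : ℂ) / ((Real.sqrt Real.pi : ℝ) : ℂ)) := by
          push_cast; ring
      _ = ((Real.sqrt 2 : ℝ) : ℂ) * (Complex.exp ((z : ℂ) ^ 2) * Complex.exp (-T ^ 2 / 2)) := by
          rw [div_self hpi, mul_one]
      _ = ((Real.sqrt 2 : ℝ) : ℂ) * Complex.exp ((z : ℂ) ^ 2 + -T ^ 2 / 2) := by
          rw [Complex.exp_add]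
      _ = (Real.sqrt 2 : ℂ) *
          Complex.exp (-(z : ℂ) ^ 2 + 2 * (Real.sqrt 2 : ℂ) * (x : ℂ) * (z : ℂ) - (x : ℂ) ^ 2) := by
          rw [hT]
          congr 2
          linear_combination (-(x : ℂ) ^ 2 / 2) * PH.hr2c
  rw [hfinal] at key2
  constructor
  · apply Summable.of_nonneg_of_le (fun n => norm_nonneg _)
      (fun n => ?_) (hsumint.mul_left ‖Cc‖)
    rw [PH.gfun_integral_eq x z n, norm_mul]
    exact mul_le_mul_of_nonneg_left (norm_integral_le_integral_norm _) (norm_nonneg _)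
  · exact key2.tsum_eq
end

section
/- Vertical-line integral Φ⁺_k for nonnegative index: for every natural number k, every real η, and every real c > 0, (1/2π) ∫_ℝ e^{(c+it)² + 2η(c+it)} / (c+it)^{k+1} dt = (1/√π) ∫_0^∞ ((2s)^k / k!) · e^{−(s−η)²} ds, both integrals converging absolutely. -/
open MeasureTheory Filter Complex


lemma aux_pow_exp (n : ℕ) {b : ℝ} (hb : 0 < b) :
    IntegrableOn (fun s : ℝ => s ^ n * Real.exp (-(b * s))) (Set.Ioi 0) := by
  have h1 : IntegrableOn (fun x : ℝ => Real.exp (-x) * x ^ ((n : ℝ) + 1 - 1)) (Set.Ioi 0) :=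
    Real.GammaIntegral_convergent (by positivity)
  have h2 : IntegrableOn (fun x : ℝ => Real.exp (-(b * x)) * (b * x) ^ ((n : ℝ) + 1 - 1))
      (Set.Ioi 0) := by
    have := (integrableOn_Ioi_comp_mul_left_iff
      (fun x : ℝ => Real.exp (-x) * x ^ ((n : ℝ) + 1 - 1)) 0 hb).mpr (by simpa using h1)
    simpa using this
  have h3 : IntegrableOn (fun x : ℝ => b ^ n * (x ^ n * Real.exp (-(b * x)))) (Set.Ioi 0) := by
    refine h2.congr_fun (fun x hx => ?_) measurableSet_Ioi
    have hx0 : (0:ℝ) < x := hx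
    simp only [add_sub_cancel_right, Real.rpow_natCast, mul_pow]
    ring
  have h4 : IntegrableOn (fun x : ℝ => ((b:ℝ) ^ n)⁻¹ * (b ^ n * (x ^ n * Real.exp (-(b * x)))))
      (Set.Ioi 0) := h3.const_mul ((b : ℝ) ^ n)⁻¹
  refine h4.congr_fun (fun x hx => ?_) measurableSet_Ioi
  field_simp

lemma aux_norm (n : ℕ) (z : ℂ) (s : ℝ) :
    ‖(s : ℂ) ^ n * Complex.exp (-(z * s))‖ = |s| ^ n * Real.exp (-(z.re * s)) := by
  rw [norm_mul, norm_pow, Complex.norm_exp]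
  simp

lemma aux_pow_cexp (n : ℕ) {z : ℂ} (hz : 0 < z.re) :
    IntegrableOn (fun s : ℝ => (s : ℂ) ^ n * Complex.exp (-(z * s))) (Set.Ioi 0) := by
  refine Integrable.mono' (aux_pow_exp n hz) ?_ ?_
  · exact (Continuous.aestronglyMeasurable (by fun_prop)).restrict
  · filter_upwards [ae_restrict_mem measurableSet_Ioi] with s hs
    rw [aux_norm, abs_of_pos hs]

lemma aux_tendsto (n : ℕ) {z : ℂ} (hz : 0 < z.re) :
    Tendsto (fun s : ℝ => (s : ℂ) ^ n * Complex.exp (-(z * s))) atTop (nhds 0) := by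
  rw [tendsto_zero_iff_norm_tendsto_zero]
  have h1 : Tendsto (fun s : ℝ => z.re * s) atTop atTop :=
    Tendsto.const_mul_atTop hz tendsto_id
  have h2 : Tendsto (fun s : ℝ => (z.re * s) ^ n * Real.exp (-(z.re * s))) atTop (nhds 0) :=
    (Real.tendsto_pow_mul_exp_neg_atTop_nhds_zero n).comp h1
  have h3 : Tendsto (fun s : ℝ => (z.re ^ n)⁻¹ * ((z.re * s) ^ n * Real.exp (-(z.re * s))))
      atTop (nhds 0) := by simpa using h2.const_mul ((z.re ^ n)⁻¹)
  apply h3.congr'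
  filter_upwards [eventually_gt_atTop (0:ℝ)] with s hs
  rw [aux_norm, abs_of_pos hs, mul_pow]
  field_simp

lemma aux_hasDerivAt (n : ℕ) {z : ℂ} (hz : z ≠ 0) (s : ℝ) :
    HasDerivAt (fun s : ℝ => -((s : ℂ) ^ (n + 1) * Complex.exp (-(z * s))) / z)
      ((s : ℂ) ^ (n + 1) * Complex.exp (-(z * s))
        - ((n : ℂ) + 1) / z * ((s : ℂ) ^ n * Complex.exp (-(z * s)))) s := by
  have h1 : HasDerivAt (fun w : ℂ => w ^ (n + 1)) (((n : ℂ) + 1) * (s : ℂ) ^ n) (s : ℂ) := by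
    simpa using hasDerivAt_pow (n + 1) (s : ℂ)
  have h2 : HasDerivAt (fun w : ℂ => Complex.exp (-(z * w)))
      (Complex.exp (-(z * (s : ℂ))) * -z) (s : ℂ) := by
    simpa using (((hasDerivAt_id ((s : ℂ))).const_mul z).neg).cexp
  have h := (((h1.comp_ofReal).mul (h2.comp_ofReal)).neg).div_const z
  refine h.congr_deriv ?_
  field_simp
  ring

lemma aux_laplace (n : ℕ) {z : ℂ} (hz : 0 < z.re) :
    ∫ s in Set.Ioi (0:ℝ), (s : ℂ) ^ n * Complex.exp (-(z * s))
      = (n.factorial : ℂ) / z ^ (n + 1) := by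
  have hz0 : z ≠ 0 := by
    intro h; rw [h] at hz; simp at hz
  induction n with
  | zero =>
    have hderiv : ∀ x ∈ Set.Ioi (0:ℝ), HasDerivAt (fun s : ℝ => -Complex.exp (-(z * s)) / z)
        ((x : ℂ) ^ 0 * Complex.exp (-(z * x))) x := by
      intro x _
      have h2 : HasDerivAt (fun w : ℂ => Complex.exp (-(z * w)))
          (Complex.exp (-(z * (x : ℂ))) * -z) (x : ℂ) := by
        simpa using (((hasDerivAt_id ((x : ℂ))).const_mul z).neg).cexp
      have h := ((h2.comp_ofReal).div_const z).neg
      convert h using 1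
      · rfl
      · funext s; simp only [Pi.neg_apply]; ring
      · rw [pow_zero, one_mul]
        field_simp
    have htend : Tendsto (fun s : ℝ => -Complex.exp (-(z * s)) / z) atTop (nhds 0) := by
      have := ((aux_tendsto 0 hz).neg).div_const z
      simp only [pow_zero, one_mul] at this
      simpa using this
    have key := integral_Ioi_of_hasDerivAt_of_tendsto
      (Continuous.continuousWithinAt (by fun_prop)) hderiv (aux_pow_cexp 0 hz) htend
    rw [key]
    simp only [pow_zero, pow_one, Nat.factorial_zero, Nat.cast_one, Complex.ofReal_zero,
      mul_zero, neg_zero, Complex.exp_zero]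
    ring
  | succ n ih =>
    have hderiv : ∀ x ∈ Set.Ioi (0:ℝ),
        HasDerivAt (fun s : ℝ => -((s : ℂ) ^ (n + 1) * Complex.exp (-(z * s))) / z)
          ((x : ℂ) ^ (n + 1) * Complex.exp (-(z * x))
            - ((n : ℂ) + 1) / z * ((x : ℂ) ^ n * Complex.exp (-(z * x)))) x :=
      fun x _ => aux_hasDerivAt n hz0 x
    have hint : IntegrableOn (fun x : ℝ => (x : ℂ) ^ (n + 1) * Complex.exp (-(z * x))
        - ((n : ℂ) + 1) / z * ((x : ℂ) ^ n * Complex.exp (-(z * x)))) (Set.Ioi 0) :=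
      (aux_pow_cexp (n + 1) hz).sub ((aux_pow_cexp n hz).const_mul _)
    have htend : Tendsto (fun s : ℝ => -((s : ℂ) ^ (n + 1) * Complex.exp (-(z * s))) / z)
        atTop (nhds 0) := by
      simpa using ((aux_tendsto (n + 1) hz).neg).div_const z
    have key := integral_Ioi_of_hasDerivAt_of_tendsto
      (Continuous.continuousWithinAt (by fun_prop)) hderiv hint htend
    simp only [Complex.ofReal_zero, ne_eq, zero_pow, Nat.succ_ne_zero, not_false_iff,
      zero_mul, neg_zero, zero_div, sub_zero] at key
    have hsub := integral_sub (aux_pow_cexp (n + 1) hz)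
      ((aux_pow_cexp n hz).const_mul (((n : ℂ) + 1) / z))
    rw [key] at hsub
    have h5 : ∫ s in Set.Ioi (0:ℝ), ((n : ℂ) + 1) / z * ((s : ℂ) ^ n * Complex.exp (-(z * s)))
        = ((n : ℂ) + 1) / z * ((n.factorial : ℂ) / z ^ (n + 1)) := by
      rw [integral_const_mul, ih]
    have h6 : (0:ℂ) = (∫ s in Set.Ioi (0:ℝ), (s : ℂ) ^ (n + 1) * Complex.exp (-(z * s)))
        - ((n : ℂ) + 1) / z * ((n.factorial : ℂ) / z ^ (n + 1)) := by
      rw [← h5]; exact hsub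
    have h7 : (∫ s in Set.Ioi (0:ℝ), (s : ℂ) ^ (n + 1) * Complex.exp (-(z * s)))
        = ((n : ℂ) + 1) / z * ((n.factorial : ℂ) / z ^ (n + 1)) := by
      linear_combination -h6
    rw [h7, Nat.factorial_succ, pow_succ]
    push_cast
    rw [div_mul_div_comm]
    ring

lemma aux_gauss (η c s : ℝ) :
    ∫ t : ℝ, Complex.exp (((c:ℂ) + Complex.I * t) ^ 2 + 2 * η * ((c:ℂ) + Complex.I * t)) *
        Complex.exp (-(((c:ℂ) + Complex.I * t) * s))
      = (Real.sqrt Real.pi : ℂ) * Complex.exp (-((s / 2 - η : ℝ) : ℂ) ^ 2) := by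
  have h1 : ∀ t : ℝ,
      Complex.exp (((c:ℂ) + Complex.I * t) ^ 2 + 2 * η * ((c:ℂ) + Complex.I * t)) *
        Complex.exp (-(((c:ℂ) + Complex.I * t) * s))
      = Complex.exp ((-1 : ℂ) * (t:ℂ) ^ 2 + (Complex.I * (2 * c + (2 * η - s))) * t
          + ((c:ℂ) ^ 2 + (2 * η - s) * c)) := by
    intro t
    rw [← Complex.exp_add]
    congr 1
    push_cast
    linear_combination (t:ℂ)^2 * Complex.I_sq
  rw [funext h1, integral_cexp_quadratic (by norm_num : ((-1:ℂ)).re < 0)]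
  congr 1
  · rw [show ((Real.pi : ℂ) / -(-1)) = (Real.pi : ℂ) by ring, Real.sqrt_eq_rpow,
      Complex.ofReal_cpow Real.pi_pos.le]
    norm_num
  · congr 1
    push_cast
    linear_combination ((2*(c:ℂ) + 2*η - s)^2/4) * Complex.I_sq


lemma aux_laplace_div (k : ℕ) {z : ℂ} (hz : 0 < z.re) (A : ℂ) :
    ∫ s in Set.Ioi (0:ℝ), ((s : ℂ) ^ k / (k.factorial : ℂ)) *
        (Complex.exp A * Complex.exp (-(z * s)))
      = Complex.exp A / z ^ (k + 1) := by
  have h1 : ∀ s : ℝ, ((s : ℂ) ^ k / (k.factorial : ℂ)) *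
      (Complex.exp A * Complex.exp (-(z * s)))
      = (Complex.exp A / (k.factorial : ℂ)) * ((s : ℂ) ^ k * Complex.exp (-(z * s))) := by
    intro s; ring
  rw [funext h1, integral_const_mul, aux_laplace k hz]
  have hk : ((k.factorial : ℂ)) ≠ 0 := Nat.cast_ne_zero.mpr k.factorial_ne_zero
  field_simp

lemma aux_G_integrable (k : ℕ) (η c : ℝ) (hc : 0 < c) :
    Integrable (fun p : ℝ × ℝ => ((p.2 : ℂ) ^ k / (k.factorial : ℂ)) *
        (Complex.exp (((c:ℂ) + Complex.I * p.1) ^ 2 + 2 * η * ((c:ℂ) + Complex.I * p.1)) *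
          Complex.exp (-(((c:ℂ) + Complex.I * p.1) * p.2))))
      (volume.prod (volume.restrict (Set.Ioi 0))) := by
  have hf : Integrable (fun t : ℝ => Real.exp (c ^ 2 + 2 * η * c) * Real.exp (-t ^ 2)) := by
    have := (integrable_exp_neg_mul_sq (one_pos)).const_mul (Real.exp (c ^ 2 + 2 * η * c))
    simpa using this
  have hg : Integrable (fun s : ℝ => |s| ^ k / (k.factorial : ℝ) * Real.exp (-(c * s)))
      (volume.restrict (Set.Ioi 0)) := by
    have h0 : IntegrableOn
        (fun s : ℝ => ((k.factorial : ℝ))⁻¹ * (s ^ k * Real.exp (-(c * s)))) (Set.Ioi 0) :=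
      (aux_pow_exp k hc).const_mul _
    refine h0.congr_fun (fun s hs => ?_) measurableSet_Ioi
    rw [abs_of_pos hs]
    ring
  refine (hf.mul_prod hg).mono' ?_ (Eventually.of_forall fun p => ?_)
  · exact Continuous.aestronglyMeasurable (by fun_prop)
  · have hA : ((((c:ℂ) + Complex.I * p.1) ^ 2 + 2 * (η:ℂ) * ((c:ℂ) + Complex.I * p.1))).re
        = c ^ 2 - p.1 ^ 2 + 2 * η * c := by
      simp [pow_two, Complex.add_re, Complex.mul_re, Complex.add_im, Complex.mul_im]
      try ring
    have hB : ((-(((c:ℂ) + Complex.I * p.1) * p.2))).re = -(c * p.2) := by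
      simp [Complex.add_re, Complex.mul_re, Complex.add_im, Complex.mul_im]
      try ring
    rw [norm_mul, norm_mul, Complex.norm_exp, Complex.norm_exp, hA, hB]
    rw [norm_div, norm_pow]
    simp only [Complex.norm_real, Real.norm_eq_abs, Complex.norm_natCast]
    rw [show c ^ 2 - p.1 ^ 2 + 2 * η * c = (c ^ 2 + 2 * η * c) + -(p.1 ^ 2) by ring,
      Real.exp_add]
    apply le_of_eq
    ring

/-- Vertical-line integral `Φ⁺_k(η)` for nonnegative index `k`:
`(1/2π) ∫_ℝ e^{(c+it)² + 2η(c+it)}/(c+it)^{k+1} dt = (1/√π) ∫_0^∞ ((2s)^k/k!) e^{-(s-η)²} ds`,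
both integrals converging absolutely. -/
theorem phiPlus_nonneg_index (k : ℕ) (η : ℝ) (c : ℝ) (hc : 0 < c) :
    Integrable (fun t : ℝ =>
      Complex.exp (((c : ℂ) + Complex.I * (t : ℂ)) ^ 2 +
          2 * (η : ℂ) * ((c : ℂ) + Complex.I * (t : ℂ))) /
        ((c : ℂ) + Complex.I * (t : ℂ)) ^ (k + 1)) ∧
    IntegrableOn (fun s : ℝ => (2 * s) ^ k / (k.factorial : ℝ) * Real.exp (-(s - η) ^ 2))
      (Set.Ioi 0) ∧
    (1 / (2 * Real.pi) : ℂ) *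
      ∫ t : ℝ,
        Complex.exp (((c : ℂ) + Complex.I * (t : ℂ)) ^ 2 +
            2 * (η : ℂ) * ((c : ℂ) + Complex.I * (t : ℂ))) /
          ((c : ℂ) + Complex.I * (t : ℂ)) ^ (k + 1)
    = (((1 / Real.sqrt Real.pi) *
        ∫ s in Set.Ioi (0 : ℝ), (2 * s) ^ k / (k.factorial : ℝ) * Real.exp (-(s - η) ^ 2) : ℝ) : ℂ) := by
  have hsqrt : (0:ℝ) < Real.sqrt Real.pi := Real.sqrt_pos.mpr Real.pi_pos
  have hkfac : (0:ℝ) < (k.factorial : ℝ) := by exact_mod_cast k.factorial_pos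
  set G : ℝ × ℝ → ℂ := fun p => ((p.2 : ℂ) ^ k / (k.factorial : ℂ)) *
      (Complex.exp (((c:ℂ) + Complex.I * p.1) ^ 2 + 2 * η * ((c:ℂ) + Complex.I * p.1)) *
        Complex.exp (-(((c:ℂ) + Complex.I * p.1) * p.2))) with hGdef
  have hG : Integrable G (volume.prod (volume.restrict (Set.Ioi 0))) :=
    aux_G_integrable k η c hc
  have hzre : ∀ t : ℝ, (0:ℝ) < ((c:ℂ) + Complex.I * t).re := by
    intro t; simpa using hc
  -- inner s-integral
  have hM3 : ∀ t : ℝ, (∫ s in Set.Ioi (0:ℝ), G (t, s))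
      = Complex.exp (((c:ℂ) + Complex.I * t) ^ 2 + 2 * η * ((c:ℂ) + Complex.I * t)) /
        ((c:ℂ) + Complex.I * t) ^ (k + 1) := by
    intro t
    simp only [hGdef]
    exact aux_laplace_div k (hzre t) _
  -- inner t-integral
  set h : ℝ → ℝ := fun s => s ^ k / (k.factorial : ℝ) *
      (Real.sqrt Real.pi * Real.exp (-(s / 2 - η) ^ 2)) with hhdef
  have hM4 : ∀ s : ℝ, (∫ t : ℝ, G (t, s)) = ((h s : ℝ) : ℂ) := by
    intro s
    simp only [hGdef]
    rw [integral_const_mul, aux_gauss η c s]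
    simp only [hhdef]
    push_cast
    ring
  -- part 1
  have part1 : Integrable (fun t : ℝ =>
      Complex.exp (((c : ℂ) + Complex.I * (t : ℂ)) ^ 2 +
          2 * (η : ℂ) * ((c : ℂ) + Complex.I * (t : ℂ))) /
        ((c : ℂ) + Complex.I * (t : ℂ)) ^ (k + 1)) := by
    have hmarg : Integrable (fun t : ℝ => ∫ s in Set.Ioi (0:ℝ), G (t, s)) volume :=
      hG.integral_prod_left
    exact hmarg.congr (Eventually.of_forall fun t => hM3 t)
  -- integrability of h on Ioi 0
  have hh_int : IntegrableOn h (Set.Ioi 0) := by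
    have hmarg2 : Integrable (fun s : ℝ => ∫ t : ℝ, G (t, s))
        (volume.restrict (Set.Ioi 0)) := hG.integral_prod_right
    have h1 : Integrable (fun s : ℝ => ((h s : ℝ) : ℂ)) (volume.restrict (Set.Ioi 0)) :=
      hmarg2.congr (Eventually.of_forall fun s => hM4 s)
    refine (h1.norm).congr ?_
    filter_upwards [ae_restrict_mem measurableSet_Ioi] with s hs
    rw [Complex.norm_real, Real.norm_eq_abs]
    apply _root_.abs_of_nonneg
    simp only [hhdef]
    have : (0:ℝ) < s := hs
    positivity
  -- part 2
  have h2x : ∀ x : ℝ, h (2 * x) = Real.sqrt Real.pi *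
      ((2 * x) ^ k / (k.factorial : ℝ) * Real.exp (-(x - η) ^ 2)) := by
    intro x
    simp only [hhdef]
    rw [mul_div_cancel_left₀ x (two_ne_zero)]
    ring
  have part2 : IntegrableOn
      (fun s : ℝ => (2 * s) ^ k / (k.factorial : ℝ) * Real.exp (-(s - η) ^ 2))
      (Set.Ioi 0) := by
    have h3 : IntegrableOn (fun x : ℝ => h (2 * x)) (Set.Ioi 0) := by
      refine (integrableOn_Ioi_comp_mul_left_iff h 0 two_pos).mpr ?_
      simpa using hh_int
    have h4 : IntegrableOn
        (fun x : ℝ => (Real.sqrt Real.pi)⁻¹ * h (2 * x)) (Set.Ioi 0) := h3.const_mul _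
    refine h4.congr_fun (fun x _ => ?_) measurableSet_Ioi
    simp only [h2x x]
    field_simp
  refine ⟨part1, part2, ?_⟩
  -- part 3
  have hswap : (∫ t : ℝ, ∫ s in Set.Ioi (0:ℝ), G (t, s))
      = ∫ s in Set.Ioi (0:ℝ), ∫ t : ℝ, G (t, s) :=
    integral_integral_swap hG
  have hLHS : (∫ t : ℝ,
      Complex.exp (((c : ℂ) + Complex.I * (t : ℂ)) ^ 2 +
          2 * (η : ℂ) * ((c : ℂ) + Complex.I * (t : ℂ))) /
        ((c : ℂ) + Complex.I * (t : ℂ)) ^ (k + 1))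
      = ∫ t : ℝ, ∫ s in Set.Ioi (0:ℝ), G (t, s) :=
    integral_congr_ae (Eventually.of_forall fun t => (hM3 t).symm)
  have hRHS1 : (∫ s in Set.Ioi (0:ℝ), ∫ t : ℝ, G (t, s))
      = (((∫ s in Set.Ioi (0:ℝ), h s : ℝ)) : ℂ) := by
    rw [setIntegral_congr_fun measurableSet_Ioi (fun s _ => hM4 s)]
    exact integral_ofReal
  have hsub : (∫ s in Set.Ioi (0:ℝ), h s)
      = 2 * (Real.sqrt Real.pi *
        ∫ s in Set.Ioi (0:ℝ), (2 * s) ^ k / (k.factorial : ℝ) * Real.exp (-(s - η) ^ 2)) := by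
    have := integral_comp_mul_left_Ioi h 0 (two_pos)
    simp only [mul_zero] at this
    rw [funext h2x] at this
    rw [integral_const_mul] at this
    have h6 : Real.sqrt Real.pi *
        (∫ s in Set.Ioi (0:ℝ), (2 * s) ^ k / (k.factorial : ℝ) * Real.exp (-(s - η) ^ 2))
        = (2:ℝ)⁻¹ • ∫ s in Set.Ioi (0:ℝ), h s := this
    rw [smul_eq_mul] at h6
    linarith [h6]
  rw [hLHS, hswap, hRHS1, hsub]
  have hpi : Real.sqrt Real.pi * Real.sqrt Real.pi = Real.pi :=
    Real.mul_self_sqrt Real.pi_pos.le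
  have hre : (1 / (2 * Real.pi) : ℝ) *
      (2 * (Real.sqrt Real.pi *
        ∫ s in Set.Ioi (0:ℝ), (2 * s) ^ k / (k.factorial : ℝ) * Real.exp (-(s - η) ^ 2)))
      = (1 / Real.sqrt Real.pi) *
        ∫ s in Set.Ioi (0:ℝ), (2 * s) ^ k / (k.factorial : ℝ) * Real.exp (-(s - η) ^ 2) := by
    have key : Real.sqrt Real.pi / Real.pi = 1 / Real.sqrt Real.pi := by
      rw [div_eq_div_iff Real.pi_ne_zero hsqrt.ne', hpi]
      ring
    rw [← key]
    have hπ : Real.pi ≠ 0 := Real.pi_ne_zero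
    field_simp
  rw [← hre]
  push_cast
  ring
end

section
/- Vertical-line integral Φ⁺_k for negative index: for every natural number m, every real η, and every real c > 0, (1/2π) ∫_ℝ (c+it)^m · e^{(c+it)² + 2η(c+it)} dt = (2^{−1−m}/√π) · e^{−η²} · H_m(−η); this is the case k = −1−m ≤ −1 of the formula Φ⁺_k(η) = (2^k/√π) e^{−η²} H_{−k−1}(−η). -/
open MeasureTheory

open Complex

private lemma norm_integrand (k : ℕ) (c η t : ℝ) :
    ‖((c : ℂ) + I * t) ^ k *
        Complex.exp (((c : ℂ) + I * t) ^ 2 + 2 * (η : ℂ) * ((c : ℂ) + I * t))‖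
      = ‖((c : ℂ) + I * t)‖ ^ k * Real.exp (c ^ 2 - t ^ 2 + 2 * η * c) := by
  have hre : ((((c : ℂ) + I * t) ^ 2 + 2 * (η : ℂ) * ((c : ℂ) + I * t))).re
      = c ^ 2 - t ^ 2 + 2 * η * c := by
    simp [pow_two, Complex.add_re, Complex.mul_re, Complex.mul_im, Complex.add_im]
  rw [norm_mul, norm_pow, Complex.norm_exp, hre]

private lemma abs_z_le (c t : ℝ) : ‖((c : ℂ) + I * t)‖ ≤ |c| + |t| := by
  calc ‖((c : ℂ) + I * t)‖ ≤ ‖(c : ℂ)‖ + ‖(I * t)‖ :=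
        norm_add_le _ _
    _ = |c| + |t| := by simp

private lemma norm_integrand_le (k : ℕ) (c : ℝ) {η R : ℝ} (hη : |η| ≤ R) (t : ℝ) :
    ‖((c : ℂ) + I * t) ^ k *
        Complex.exp (((c : ℂ) + I * t) ^ 2 + 2 * (η : ℂ) * ((c : ℂ) + I * t))‖
      ≤ (2 ^ k * Real.exp (c ^ 2 + 2 * R * |c|)) *
          ((|c| ^ k + |t| ^ k) * Real.exp (-t ^ 2)) := by
  rw [norm_integrand]
  have h1 : ‖((c : ℂ) + I * t)‖ ^ k ≤ 2 ^ k * (|c| ^ k + |t| ^ k) := by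
    calc ‖((c : ℂ) + I * t)‖ ^ k ≤ (|c| + |t|) ^ k := by
          exact pow_le_pow_left₀ (norm_nonneg _) (abs_z_le c t) k
      _ ≤ (2 * max |c| |t|) ^ k := by
          apply pow_le_pow_left₀ (by positivity)
          rw [two_mul]
          exact add_le_add (le_max_left _ _) (le_max_right _ _)
      _ = 2 ^ k * max |c| |t| ^ k := by rw [mul_pow]
      _ ≤ 2 ^ k * (|c| ^ k + |t| ^ k) := by
          apply mul_le_mul_of_nonneg_left _ (by positivity)
          rcases max_cases |c| |t| with ⟨h, _⟩ | ⟨h, _⟩ <;> rw [h]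
          · exact le_add_of_nonneg_right (by positivity)
          · exact le_add_of_nonneg_left (by positivity)
  have h2 : Real.exp (c ^ 2 - t ^ 2 + 2 * η * c)
      ≤ Real.exp (c ^ 2 + 2 * R * |c|) * Real.exp (-t ^ 2) := by
    rw [← Real.exp_add]
    apply Real.exp_le_exp.2
    have : 2 * η * c ≤ 2 * R * |c| := by
      have h' : η * c ≤ |η| * |c| := le_trans (le_abs_self _) (by rw [abs_mul])
      have h'' : |η| * |c| ≤ R * |c| := mul_le_mul_of_nonneg_right hη (abs_nonneg _)
      linarith
    linarith
  calc ‖((c : ℂ) + I * t)‖ ^ k * Real.exp (c ^ 2 - t ^ 2 + 2 * η * c)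
      ≤ (2 ^ k * (|c| ^ k + |t| ^ k)) * (Real.exp (c ^ 2 + 2 * R * |c|) * Real.exp (-t ^ 2)) := by
        apply mul_le_mul h1 h2 (Real.exp_pos _).le (by positivity)
    _ = (2 ^ k * Real.exp (c ^ 2 + 2 * R * |c|)) * ((|c| ^ k + |t| ^ k) * Real.exp (-t ^ 2)) := by
        ring

private lemma integrable_bound (a K : ℝ) (k : ℕ) :
    Integrable (fun t : ℝ => K * ((a ^ k + |t| ^ k) * Real.exp (-t ^ 2))) := by
  apply Integrable.const_mul
  have h1 : Integrable (fun t : ℝ => a ^ k * Real.exp (-t ^ 2)) := by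
    apply Integrable.const_mul
    simpa using integrable_exp_neg_mul_sq (b := 1) one_pos
  have h2 : Integrable (fun t : ℝ => |t| ^ k * Real.exp (-t ^ 2)) := by
    have hs : (-1 : ℝ) < (k : ℝ) := lt_of_lt_of_le (by norm_num) (Nat.cast_nonneg k)
    have h := (integrable_rpow_mul_exp_neg_mul_sq (b := 1) one_pos hs)
    simp_rw [Real.rpow_natCast] at h
    have h' : (fun t : ℝ => |t| ^ k * Real.exp (-t ^ 2))
        = fun t : ℝ => |t ^ k * Real.exp (-1 * t ^ 2)| := by
      funext t
      rw [abs_mul, _root_.abs_pow, abs_of_pos (Real.exp_pos _), neg_one_mul]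
    rw [h']
    exact h.abs
  exact (h1.add h2).congr (Filter.Eventually.of_forall fun t => by simp [add_mul])

private lemma continuous_integrand (k : ℕ) (c η : ℝ) :
    Continuous (fun t : ℝ => ((c : ℂ) + I * t) ^ k *
      Complex.exp (((c : ℂ) + I * t) ^ 2 + 2 * (η : ℂ) * ((c : ℂ) + I * t))) := by
  fun_prop

private lemma integrable_integrand (k : ℕ) (c η : ℝ) :
    Integrable (fun t : ℝ => ((c : ℂ) + I * t) ^ k *
      Complex.exp (((c : ℂ) + I * t) ^ 2 + 2 * (η : ℂ) * ((c : ℂ) + I * t))) := by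
  apply Integrable.mono' (integrable_bound |c| (2 ^ k * Real.exp (c ^ 2 + 2 * |η| * |c|)) k)
    (continuous_integrand k c η).aestronglyMeasurable
  exact Filter.Eventually.of_forall fun t => norm_integrand_le k c le_rfl t

private lemma hasDeriv_Lint (m : ℕ) (c η₀ : ℝ) :
    HasDerivAt (fun η : ℝ => ∫ t : ℝ, ((c : ℂ) + I * t) ^ m *
        Complex.exp (((c : ℂ) + I * t) ^ 2 + 2 * (η : ℂ) * ((c : ℂ) + I * t)))
      (2 * ∫ t : ℝ, ((c : ℂ) + I * t) ^ (m + 1) *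
        Complex.exp (((c : ℂ) + I * t) ^ 2 + 2 * (η₀ : ℂ) * ((c : ℂ) + I * t))) η₀ := by
  have key := (hasDerivAt_integral_of_dominated_loc_of_deriv_le (μ := volume)
    (F := fun (η : ℝ) (t : ℝ) => ((c : ℂ) + I * t) ^ m *
        Complex.exp (((c : ℂ) + I * t) ^ 2 + 2 * (η : ℂ) * ((c : ℂ) + I * t)))
    (F' := fun (η : ℝ) (t : ℝ) => 2 * (((c : ℂ) + I * t) ^ (m + 1) *
        Complex.exp (((c : ℂ) + I * t) ^ 2 + 2 * (η : ℂ) * ((c : ℂ) + I * t))))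
    (x₀ := η₀)
    (bound := fun t : ℝ => 2 * ((2 ^ (m + 1) * Real.exp (c ^ 2 + 2 * (|η₀| + 1) * |c|)) *
        ((|c| ^ (m + 1) + |t| ^ (m + 1)) * Real.exp (-t ^ 2))))
    (Metric.ball_mem_nhds η₀ one_pos)
    (Filter.Eventually.of_forall fun η => (continuous_integrand m c η).aestronglyMeasurable)
    (integrable_integrand m c η₀)
    ((continuous_const.mul (continuous_integrand (m + 1) c η₀)).aestronglyMeasurable)
    ?_ ?_ ?_).2
  · simpa [MeasureTheory.integral_const_mul] using key
  · apply Filter.Eventually.of_forall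
    intro t η hη
    rw [norm_mul]
    have hb : |η| ≤ |η₀| + 1 := by
      have := mem_ball_iff_norm.1 hη
      have h2 : |η - η₀| < 1 := by simpa [Real.norm_eq_abs] using this
      calc |η| = |η₀ + (η - η₀)| := by ring_nf
        _ ≤ |η₀| + |η - η₀| := abs_add_le _ _
        _ ≤ |η₀| + 1 := by linarith
    have := norm_integrand_le (m + 1) c hb t
    simpa using mul_le_mul_of_nonneg_left this (by norm_num : (0:ℝ) ≤ ‖(2:ℂ)‖)
  · exact (integrable_bound |c| _ (m + 1)).const_mul 2
  · apply Filter.Eventually.of_forall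
    intro t η _
    set z : ℂ := (c : ℂ) + I * t with hz
    have h0 : HasDerivAt (fun s : ℝ => (s : ℂ)) 1 η := by
      exact Complex.ofRealCLM.hasDerivAt (x := η)
    have h1 : HasDerivAt (fun s : ℝ => z ^ 2 + 2 * (s : ℂ) * z) (2 * z) η := by
      have h2 : HasDerivAt (fun s : ℝ => z ^ 2 + (2 * z) * (s : ℂ)) (2 * z) η := by
        simpa using (h0.const_mul (2 * z)).const_add (z ^ 2)
      have : (fun s : ℝ => z ^ 2 + 2 * (s : ℂ) * z)
          = fun s : ℝ => z ^ 2 + (2 * z) * (s : ℂ) := by funext s; ring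
      rw [this]
      exact h2
    have h3 := (h1.cexp).const_mul (z ^ m)
    convert h3 using 1
    · rfl
    ring

private lemma base_case (c η : ℝ) :
    (∫ t : ℝ, Complex.exp (((c : ℂ) + I * t) ^ 2 + 2 * (η : ℂ) * ((c : ℂ) + I * t)))
      = (Real.sqrt Real.pi : ℂ) * Complex.exp (-(η : ℂ) ^ 2) := by
  have hpt : ∀ t : ℝ, ((c : ℂ) + I * t) ^ 2 + 2 * (η : ℂ) * ((c : ℂ) + I * t)
      = (-1) * (t : ℂ) ^ 2 + (2 * (c : ℂ) * I + 2 * (η : ℂ) * I) * t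
          + ((c : ℂ) ^ 2 + 2 * (η : ℂ) * (c : ℂ)) := by
    intro t
    linear_combination (t : ℂ) ^ 2 * Complex.I_sq
  simp_rw [hpt]
  rw [integral_cexp_quadratic (by norm_num) _ _]
  have h1 : ((Real.pi : ℂ) / - -1) ^ (1 / 2 : ℂ) = (Real.sqrt Real.pi : ℂ) := by
    rw [show ((Real.pi : ℂ) / - -1) = ((Real.pi : ℝ) : ℂ) by norm_num,
      show ((1 / 2 : ℂ)) = ((1 / 2 : ℝ) : ℂ) by norm_num,
      ← Complex.ofReal_cpow Real.pi_pos.le, ← Real.sqrt_eq_rpow]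
  rw [h1]
  congr 1
  congr 1
  linear_combination ((c : ℂ) + (η : ℂ)) ^ 2 * Complex.I_sq

private lemma entire_iter (m : ℕ) :
    Differentiable ℂ (iteratedDeriv m fun w : ℂ => Complex.exp (-w ^ 2)) := by
  have hf : ContDiff ℂ (⊤ : ℕ∞) (fun w : ℂ => Complex.exp (-w ^ 2)) :=
    ((contDiff_id.pow 2).neg).cexp
  exact hf.differentiable_iteratedDeriv m (by exact_mod_cast (by simp : (m:ℕ∞) < ⊤))

private lemma key_lemma (c : ℝ) (m : ℕ) (η : ℝ) :
    (∫ t : ℝ, ((c : ℂ) + I * t) ^ m *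
        Complex.exp (((c : ℂ) + I * t) ^ 2 + 2 * (η : ℂ) * ((c : ℂ) + I * t)))
      = (Real.sqrt Real.pi : ℂ) * (-1) ^ m / 2 ^ m *
          iteratedDeriv m (fun w : ℂ => Complex.exp (-w ^ 2)) (-(η : ℂ)) := by
  induction m generalizing η with
  | zero =>
    simp only [pow_zero, one_mul, iteratedDeriv_zero, mul_one, div_one]
    rw [base_case c η]
    congr 1
    rw [neg_sq]
  | succ m ih =>
    have h1 := hasDeriv_Lint m c η
    have hfun : (fun s : ℝ => ∫ t : ℝ, ((c : ℂ) + I * t) ^ m *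
        Complex.exp (((c : ℂ) + I * t) ^ 2 + 2 * (s : ℂ) * ((c : ℂ) + I * t)))
        = fun s : ℝ => (Real.sqrt Real.pi : ℂ) * (-1) ^ m / 2 ^ m *
            iteratedDeriv m (fun w : ℂ => Complex.exp (-w ^ 2)) (-(s : ℂ)) :=
      funext fun s => ih s
    rw [hfun] at h1
    set g := iteratedDeriv m (fun w : ℂ => Complex.exp (-w ^ 2)) with hg
    have hgm : HasDerivAt g
        (iteratedDeriv (m + 1) (fun w : ℂ => Complex.exp (-w ^ 2)) (-(η : ℂ))) (-(η : ℂ)) := by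
      rw [iteratedDeriv_succ]
      exact ((entire_iter m) _).hasDerivAt
    have hneg : HasDerivAt (fun w : ℂ => g (-w))
        (-(iteratedDeriv (m + 1) (fun w : ℂ => Complex.exp (-w ^ 2)) (-(η : ℂ)))) ((η : ℂ)) := by
      have := hgm.comp (η : ℂ) (hasDerivAt_neg (η : ℂ))
      simpa [mul_comm, Function.comp_def] using this
    have hre : HasDerivAt (fun s : ℝ => g (-(s : ℂ)))
        (-(iteratedDeriv (m + 1) (fun w : ℂ => Complex.exp (-w ^ 2)) (-(η : ℂ)))) η :=
      hneg.comp_ofReal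
    have h2 := hre.const_mul ((Real.sqrt Real.pi : ℂ) * (-1) ^ m / 2 ^ m)
    have huniq := h1.unique h2
    rw [pow_succ, pow_succ]
    linear_combination (1 / 2 : ℂ) * huniq

/-- Vertical-line integral `Φ⁺_k(η)` for negative index `k = -1-m`:
`(1/2π) ∫_ℝ (c+it)^m e^{(c+it)² + 2η(c+it)} dt = (2^{-1-m}/√π) e^{-η²} H_m(-η)`. -/
theorem phiPlus_neg_index (m : ℕ) (η : ℝ) (c : ℝ) (hc : 0 < c) :
    (1 / (2 * Real.pi) : ℂ) *
      ∫ t : ℝ,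
        ((c : ℂ) + Complex.I * (t : ℂ)) ^ m *
          Complex.exp (((c : ℂ) + Complex.I * (t : ℂ)) ^ 2 +
            2 * (η : ℂ) * ((c : ℂ) + Complex.I * (t : ℂ)))
    = ((2 : ℂ) ^ (m + 1))⁻¹ / (Real.sqrt Real.pi : ℂ) *
        Complex.exp (-(η : ℂ) ^ 2) * physHermite m (-(η : ℂ)) := by
  rw [key_lemma c m η]
  unfold physHermite
  have hExp : Complex.exp (-(η : ℂ) ^ 2) * Complex.exp ((-(η : ℂ)) ^ 2) = 1 := by
    rw [neg_sq, ← Complex.exp_add]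
    simp
  have hπ : (Real.sqrt Real.pi : ℂ) * (Real.sqrt Real.pi : ℂ) = (Real.pi : ℂ) := by
    rw [← Complex.ofReal_mul, Real.mul_self_sqrt Real.pi_pos.le]
  have hs : (Real.sqrt Real.pi : ℂ) ≠ 0 := by
    simpa using (Real.sqrt_pos.2 Real.pi_pos).ne'
  have hp : (Real.pi : ℂ) ≠ 0 := by
    exact_mod_cast Real.pi_ne_zero
  set G := iteratedDeriv m (fun w : ℂ => Complex.exp (-w ^ 2)) (-(η : ℂ)) with hG
  rw [neg_sq] at hExp ⊢
  field_simp
  linear_combination G * 2 ^ (m + 1) * hπ -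
    G * (2 * (Real.pi : ℂ) * 2 ^ m) * hExp
end

section
/- Vertical cusp position (Proposition 10.1(i)): let n₁, n₂, d, b, c′ be positive reals with b + d + c′ = 1. Set a₁ = −n₁−b, b₁ = −n₁, a₂ = 0, b₂ = d, a₃ = n₂+d, b₃ = n₂+d+c′, and for real w away from the points a_i, b_i and from the zeros of S define P(w) = ∏_{i=1}^3 (w−b_i)/(w−a_i), S(w) = Σ_{i=1}^3 ( 1/(w−b_i) − 1/(w−a_i) ), and y(w) = 1 − (P(w)−1)² / (P(w)·S(w)). Then y(w) converges to a limit y(b₂) as w → d (through values w ≠ d), and this limit satisfies 1 − d − y(b₂) = d·(n₂·b − (n₁+d)·c′) / ( (n₁+d)·(n₂+c′) ). In particular, y(b₂) < 1 − d (a cusp strictly below the tip of the cut, tangent to the extension of the right-hand segment of the cut) if and only if n₂·b − n₁·c′ > d·c′. -/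
/-- Vertical cusp position (Proposition 10.1(i)): for Petrov's parametrization of the
arctic curve of the one-cut hexagon (cuts `[a_i,b_i]` with `a₁ = -n₁-b`, `b₁ = -n₁`,
`a₂ = 0`, `b₂ = d`, `a₃ = n₂+d`, `b₃ = n₂+d+c'`), the value `y(b₂) = lim_{w→d} y(w)`
exists and satisfies `1 - d - y(b₂) = d(n₂b - (n₁+d)c')/((n₁+d)(n₂+c'))`; in particular
`y(b₂) < 1 - d` (a cusp strictly below the tip of the cut) iff `n₂b - n₁c' > dc'`. -/
theorem vertical_cusp_position (n₁ n₂ d b c' : ℝ)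
    (hn₁ : 0 < n₁) (hn₂ : 0 < n₂) (hd : 0 < d) (hb : 0 < b) (hc' : 0 < c')
    (hsum : b + d + c' = 1)
    (P S y : ℝ → ℝ)
    (hP : ∀ w, P w = ((w + n₁) / (w + n₁ + b)) * ((w - d) / w) *
        ((w - (n₂ + d + c')) / (w - (n₂ + d))))
    (hS : ∀ w, S w = (1 / (w + n₁) - 1 / (w + n₁ + b)) + (1 / (w - d) - 1 / w) +
        (1 / (w - (n₂ + d + c')) - 1 / (w - (n₂ + d))))
    (hy : ∀ w, y w = 1 - (P w - 1) ^ 2 / (P w * S w)) :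
    ∃ L : ℝ,
      Filter.Tendsto y (nhdsWithin d ({d} : Set ℝ)ᶜ) (nhds L) ∧
      1 - d - L = d * (n₂ * b - (n₁ + d) * c') / ((n₁ + d) * (n₂ + c')) ∧
      (L < 1 - d ↔ n₂ * b - n₁ * c' > d * c') := by
  have hd0 : d ≠ 0 := ne_of_gt hd
  have h1 : (0:ℝ) < d + n₁ := by linarith
  have h2 : (0:ℝ) < d + n₁ + b := by linarith
  have h3 : d - (n₂ + d) ≠ 0 := by intro h; nlinarith
  have h4 : d - (n₂ + d + c') ≠ 0 := by intro h; nlinarith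
  set M : ℝ := ((d + n₁) / (d + n₁ + b)) * (1 / d) * ((n₂ + c') / n₂) with hM
  have hMpos : 0 < M := by positivity
  set L : ℝ := 1 - 1 / M with hL
  -- the key identity
  have hkey : 1 - d - L = d * (n₂ * b - (n₁ + d) * c') / ((n₁ + d) * (n₂ + c')) := by
    rw [hL, hM]
    have hn₂0 : n₂ ≠ 0 := ne_of_gt hn₂
    have h10 : d + n₁ ≠ 0 := ne_of_gt h1
    have h20 : d + n₁ + b ≠ 0 := ne_of_gt h2
    have h5 : n₁ + d ≠ 0 := by positivity
    have h6 : n₂ + c' ≠ 0 := by positivity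
    field_simp
    ring
  refine ⟨L, ?_, hkey, ?_⟩
  · -- tendsto
    set F := nhdsWithin d ({d} : Set ℝ)ᶜ with hF
    -- continuous surrogate for P * S
    set f : ℝ → ℝ := fun w =>
      (((w + n₁) / (w + n₁ + b)) * ((w - d) / w) * ((w - (n₂ + d + c')) / (w - (n₂ + d)))) *
        ((1 / (w + n₁) - 1 / (w + n₁ + b)) - 1 / w +
          (1 / (w - (n₂ + d + c')) - 1 / (w - (n₂ + d)))) +
      ((w + n₁) / (w + n₁ + b)) * (1 / w) * ((w - (n₂ + d + c')) / (w - (n₂ + d))) with hf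
    have hU : ∀ᶠ w in nhds d, (w + n₁ ≠ 0 ∧ w + n₁ + b ≠ 0 ∧ w ≠ 0 ∧
        w - (n₂ + d) ≠ 0 ∧ w - (n₂ + d + c') ≠ 0) := by
      have hcont : Continuous fun w : ℝ => (w + n₁, w + n₁ + b, w, w - (n₂ + d), w - (n₂ + d + c')) := by
        fun_prop
      have : ∀ᶠ w in nhds d, w + n₁ ≠ 0 := by
        apply (continuous_id.add continuous_const).continuousAt.eventually_ne
        simp; intro h; nlinarith
      have h2' : ∀ᶠ w in nhds d, w + n₁ + b ≠ 0 := by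
        apply ((continuous_id.add continuous_const).add continuous_const).continuousAt.eventually_ne
        show d + n₁ + b ≠ 0; intro h; nlinarith
      have h3' : ∀ᶠ w in nhds d, w ≠ 0 := by
        apply continuous_id.continuousAt.eventually_ne; exact hd0
      have h4' : ∀ᶠ w in nhds d, w - (n₂ + d) ≠ 0 := by
        apply (continuous_id.sub continuous_const).continuousAt.eventually_ne h3
      have h5' : ∀ᶠ w in nhds d, w - (n₂ + d + c') ≠ 0 := by
        apply (continuous_id.sub continuous_const).continuousAt.eventually_ne h4
      filter_upwards [this, h2', h3', h4', h5'] with w a b c dd e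
      exact ⟨a, b, c, dd, e⟩
    have heq : (fun w => P w * S w) =ᶠ[F] f := by
      have hmem : ∀ᶠ w in F, w ∈ ({d} : Set ℝ)ᶜ := self_mem_nhdsWithin
      filter_upwards [hU.filter_mono nhdsWithin_le_nhds, hmem] with w hw hwd
      obtain ⟨e1, e2, e3, e4, e5⟩ := hw
      have hwd' : w - d ≠ 0 := sub_ne_zero.mpr (by simpa using hwd)
      have hrest : S w - 1 / (w - d) = (1 / (w + n₁) - 1 / (w + n₁ + b)) - 1 / w +
          (1 / (w - (n₂ + d + c')) - 1 / (w - (n₂ + d))) := by rw [hS]; ring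
      have hQ : P w * (1 / (w - d)) =
          ((w + n₁) / (w + n₁ + b)) * (1 / w) * ((w - (n₂ + d + c')) / (w - (n₂ + d))) := by
        rw [hP]
        have hcancel : (w - d) / w * (1 / (w - d)) = 1 / w := by
          field_simp
        calc (w + n₁) / (w + n₁ + b) * ((w - d) / w) * ((w - (n₂ + d + c')) / (w - (n₂ + d))) * (1 / (w - d))
            = (w + n₁) / (w + n₁ + b) * ((w - d) / w * (1 / (w - d))) * ((w - (n₂ + d + c')) / (w - (n₂ + d))) := by ring
          _ = (w + n₁) / (w + n₁ + b) * (1 / w) * ((w - (n₂ + d + c')) / (w - (n₂ + d))) := by rw [hcancel]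
      have : P w * S w = P w * (S w - 1 / (w - d)) + P w * (1 / (w - d)) := by ring
      rw [this, hrest, hQ]
      simp only [hf]
      rw [hP]
    have hfc : ContinuousAt f d := by
      rw [hf]
      have e1 : d + n₁ ≠ 0 := ne_of_gt h1
      have e2 : d + n₁ + b ≠ 0 := ne_of_gt h2
      fun_prop (disch := assumption)
    have hfd : f d = M := by
      rw [hf, hM]
      have : d - d = 0 := by ring
      simp only [this]
      have e3 : d - (n₂ + d + c') = -(n₂ + c') := by ring
      have e4 : d - (n₂ + d) = -n₂ := by ring
      rw [e3, e4, neg_div_neg_eq]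
      ring
    have hPS : Filter.Tendsto (fun w => P w * S w) F (nhds M) := by
      refine Filter.Tendsto.congr' heq.symm ?_
      rw [← hfd]
      exact hfc.continuousWithinAt.tendsto
    have hPt : Filter.Tendsto P F (nhds 0) := by
      have hPc : ContinuousAt (fun w : ℝ => ((w + n₁) / (w + n₁ + b)) * ((w - d) / w) *
          ((w - (n₂ + d + c')) / (w - (n₂ + d)))) d := by
        have e1 : d + n₁ ≠ 0 := ne_of_gt h1
        have e2 : d + n₁ + b ≠ 0 := ne_of_gt h2
        fun_prop (disch := assumption)
      have hv : ((d + n₁) / (d + n₁ + b)) * ((d - d) / d) * ((d - (n₂ + d + c')) / (d - (n₂ + d))) = 0 := by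
        simp
      have := (hPc.continuousWithinAt (s := ({d} : Set ℝ)ᶜ)).tendsto
      rw [hv] at this
      exact Filter.Tendsto.congr (fun w => (hP w).symm) this
    have hnum : Filter.Tendsto (fun w => (P w - 1) ^ 2) F (nhds 1) := by
      have := ((hPt.sub (tendsto_const_nhds (x := (1:ℝ)))).pow 2)
      simpa using this
    have hq : Filter.Tendsto (fun w => (P w - 1) ^ 2 / (P w * S w)) F (nhds (1 / M)) :=
      hnum.div hPS (ne_of_gt hMpos)
    have : Filter.Tendsto (fun w => 1 - (P w - 1) ^ 2 / (P w * S w)) F (nhds L) := by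
      rw [hL]
      exact tendsto_const_nhds.sub hq
    exact Filter.Tendsto.congr (fun w => (hy w).symm) this
  · -- the iff
    have hden : (0:ℝ) < (n₁ + d) * (n₂ + c') := by positivity
    constructor
    · intro h
      have h0 : 0 < 1 - d - L := by linarith
      rw [hkey] at h0
      rw [lt_div_iff₀ hden, zero_mul] at h0
      nlinarith
    · intro h
      have h0 : 0 < d * (n₂ * b - (n₁ + d) * c') / ((n₁ + d) * (n₂ + c')) := by
        rw [lt_div_iff₀ hden, zero_mul]
        nlinarith
      rw [← hkey] at h0
      linarith
end

section
/- Oblique cusp position (Proposition 10.1(ii)): let n₁, n₂, d, b, c′ be positive reals with b + d + c′ = 1. Set a₁ = −n₁−b, b₁ = −n₁, a₂ = 0, b₂ = d, a₃ = n₂+d, b₃ = n₂+d+c′, and for real w away from the points a_i, b_i and from the zeros of S define P(w) = ∏_{i=1}^3 (w−b_i)/(w−a_i), S(w) = Σ_{i=1}^3 ( 1/(w−b_i) − 1/(w−a_i) ), x(w) = w + (P(w)−1)/S(w), and y(w) = 1 − (P(w)−1)²/(P(w)·S(w)). Then x(w) and y(w) converge to limits x(a₂) and y(a₂) as w → 0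 (through values w ≠ 0), and these limits satisfy 1 − d − y(a₂) = x(a₂) − d = d·(n₁·c′ − (n₂+d)·b) / ( (n₁+b)·(n₂+d) ). In particular, the cuspidal point lies on the extension of the left-hand (slope −1) segment of the cut strictly below its tip if and only if n₂·b − n₁·c′ < −d·b. -/
/-!
At `w = a₂ = 0` both `P` and `S` have a simple pole: `P w = p w / w` and `S w = s w / w` with
`p`, `s` regular at `0`. Cancelling the common factor `1 / w`, both `(P - 1) / S = (p - w) / s`
and `(P - 1)² / (P S) = (p - w)² / (p s)` tend to the same ratio `ρ = p 0 / s 0` of residues, so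
`x(a₂) = ρ` and `y(a₂) = 1 - ρ`. Here `s 0 = -1` and `p 0 = -d n₁ (n₂ + d + c') / ((n₁ + b) (n₂ + d))`,
and the rest is the sign of `ρ - d`.
-/

open Filter Topology

section SimplePole

variable {P S p s : ℝ → ℝ} {a : ℝ}

theorem tendsto_sub_one_div_of_simple_pole (hp : ContinuousAt p a) (hs : ContinuousAt s a)
    (hs₀ : s a ≠ 0) (hP : ∀ w ≠ a, P w = p w / (w - a)) (hS : ∀ w ≠ a, S w = s w / (w - a)) :
    Tendsto (fun w => (P w - 1) / S w) (𝓝[≠] a) (𝓝 (p a / s a)) := by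
  have hreg : Tendsto (fun w => (p w - (w - a)) / s w) (𝓝 a) (𝓝 (p a / s a)) := by
    have h := (hp.tendsto.sub ((continuous_sub_right a).tendsto a)).div hs.tendsto hs₀
    rwa [sub_self, sub_zero] at h
  refine (hreg.mono_left nhdsWithin_le_nhds).congr' ?_
  filter_upwards [eventually_mem_nhdsWithin] with w (hw : w ≠ a)
  have hwa : w - a ≠ 0 := sub_ne_zero.mpr hw
  rw [hP w hw, hS w hw, div_sub_one hwa, div_div_div_cancel_right₀ hwa]

theorem tendsto_sub_one_sq_div_mul_of_simple_pole (hp : ContinuousAt p a)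
    (hs : ContinuousAt s a) (hp₀ : p a ≠ 0) (hs₀ : s a ≠ 0)
    (hP : ∀ w ≠ a, P w = p w / (w - a)) (hS : ∀ w ≠ a, S w = s w / (w - a)) :
    Tendsto (fun w => (P w - 1) ^ 2 / (P w * S w)) (𝓝[≠] a) (𝓝 (p a / s a)) := by
  have hreg : Tendsto (fun w => (p w - (w - a)) ^ 2 / (p w * s w)) (𝓝 a)
      (𝓝 (p a / s a)) := by
    have h := ((hp.tendsto.sub ((continuous_sub_right a).tendsto a)).pow 2).div
      (hp.tendsto.mul hs.tendsto) (mul_ne_zero hp₀ hs₀)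
    rwa [sub_self, sub_zero, sq, mul_div_mul_left _ _ hp₀] at h
  refine (hreg.mono_left nhdsWithin_le_nhds).congr' ?_
  filter_upwards [eventually_mem_nhdsWithin] with w (hw : w ≠ a)
  have hwa : w - a ≠ 0 := sub_ne_zero.mpr hw
  rw [hP w hw, hS w hw, div_sub_one hwa, div_pow, div_mul_div_comm, ← sq,
    div_div_div_cancel_right₀ (pow_ne_zero 2 hwa)]

end SimplePole

namespace OneCutHexagon

variable (n₁ n₂ d b c' : ℝ)

/-- `w P(w)`, regular at the pole `a₂ = 0` of `P`. -/
noncomputable def pReg (w : ℝ) : ℝ :=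
  (w + n₁) / (w + n₁ + b) * ((w - (n₂ + d + c')) / (w - (n₂ + d))) * (w - d)

/-- `w S(w)`, regular at the pole `a₂ = 0` of `S`. -/
noncomputable def sReg (w : ℝ) : ℝ :=
  w * (1 / (w + n₁) - 1 / (w + n₁ + b) + 1 / (w - d) +
    (1 / (w - (n₂ + d + c')) - 1 / (w - (n₂ + d)))) - 1

theorem pReg_zero : pReg n₁ n₂ d b c' 0 = -(d * n₁ * (n₂ + d + c') / ((n₁ + b) * (n₂ + d))) := by
  simp only [pReg, zero_add, zero_sub, neg_div_neg_eq]
  rw [div_mul_div_comm]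
  ring

theorem sReg_zero : sReg n₁ n₂ d b c' 0 = -1 := by
  simp [sReg]

variable {n₁ n₂ d b c'}

theorem pReg_continuousAt (h₁ : n₁ + b ≠ 0) (h₂ : n₂ + d ≠ 0) :
    ContinuousAt (pReg n₁ n₂ d b c') 0 := by
  unfold pReg
  fun_prop (disch := simp only [zero_sub, zero_add, neg_ne_zero]; assumption)

theorem sReg_continuousAt (hn₁ : n₁ ≠ 0) (h₁ : n₁ + b ≠ 0) (hd : d ≠ 0) (h₂ : n₂ + d ≠ 0)
    (h₃ : n₂ + d + c' ≠ 0) : ContinuousAt (sReg n₁ n₂ d b c') 0 := by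
  unfold sReg
  fun_prop (disch := simp only [zero_sub, zero_add, neg_ne_zero]; assumption)

end OneCutHexagon

open OneCutHexagon in
theorem oblique_cusp_position_general (n₁ n₂ d b c' : ℝ)
    (hn₁ : 0 < n₁) (hn₂ : 0 < n₂) (hd : 0 < d) (hb : 0 < b) (hc' : 0 < c')
    (P S x y : ℝ → ℝ)
    (hP : ∀ w, P w = ((w + n₁) / (w + n₁ + b)) * ((w - d) / w) *
        ((w - (n₂ + d + c')) / (w - (n₂ + d))))
    (hS : ∀ w, S w = (1 / (w + n₁) - 1 / (w + n₁ + b)) + (1 / (w - d) - 1 / w) +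
        (1 / (w - (n₂ + d + c')) - 1 / (w - (n₂ + d))))
    (hx : ∀ w, x w = w + (P w - 1) / S w)
    (hy : ∀ w, y w = 1 - (P w - 1) ^ 2 / (P w * S w)) :
    ∃ Lx Ly : ℝ,
      Filter.Tendsto x (nhdsWithin 0 ({0} : Set ℝ)ᶜ) (nhds Lx) ∧
      Filter.Tendsto y (nhdsWithin 0 ({0} : Set ℝ)ᶜ) (nhds Ly) ∧
      1 - d - Ly = Lx - d ∧
      Lx - d = d * (n₁ * c' - (n₂ + d) * b) / ((n₁ + b) * (n₂ + d)) ∧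
      ((d < Lx ∧ Ly < 1 - d) ↔ n₂ * b - n₁ * c' < -(d * b)) := by
  set ρ := d * n₁ * (n₂ + d + c') / ((n₁ + b) * (n₂ + d)) with hρ
  have hP_pole : ∀ w ≠ 0, P w = pReg n₁ n₂ d b c' w / (w - 0) := fun w _ => by
    rw [hP, pReg, sub_zero]
    ring
  have hS_pole : ∀ w ≠ 0, S w = sReg n₁ n₂ d b c' w / (w - 0) := fun w hw => by
    rw [hS, sReg, sub_zero]; field_simp; ring
  have hp : ContinuousAt (pReg n₁ n₂ d b c') 0 := pReg_continuousAt (by positivity) (by positivity)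
  have hs : ContinuousAt (sReg n₁ n₂ d b c') 0 :=
    sReg_continuousAt hn₁.ne' (by positivity) hd.ne' (by positivity) (by positivity)
  have hp₀ : pReg n₁ n₂ d b c' 0 ≠ 0 := by rw [pReg_zero]; exact neg_ne_zero.mpr (by positivity)
  have hs₀ : sReg n₁ n₂ d b c' 0 ≠ 0 := by rw [sReg_zero]; norm_num
  have hratio : pReg n₁ n₂ d b c' 0 / sReg n₁ n₂ d b c' 0 = ρ := by
    rw [pReg_zero, sReg_zero, neg_div_neg_eq, div_one]
  have hx_lim : Tendsto x (𝓝[≠] 0) (𝓝 ρ) := by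
    have h := (tendsto_nhdsWithin_of_tendsto_nhds tendsto_id).add
      (tendsto_sub_one_div_of_simple_pole hp hs hs₀ hP_pole hS_pole)
    rw [hratio, zero_add] at h
    exact h.congr fun w => (hx w).symm
  have hy_lim : Tendsto y (𝓝[≠] 0) (𝓝 (1 - ρ)) := by
    have h := tendsto_const_nhds (x := (1 : ℝ)).sub
      (tendsto_sub_one_sq_div_mul_of_simple_pole hp hs hp₀ hs₀ hP_pole hS_pole)
    rw [hratio] at h
    exact h.congr fun w => (hy w).symm
  have hρd : ρ - d = d * (n₁ * c' - (n₂ + d) * b) / ((n₁ + b) * (n₂ + d)) := by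
    rw [hρ]; field_simp; ring
  have hd_lt : d < ρ ↔ n₂ * b - n₁ * c' < -(d * b) := by
    rw [← sub_pos, hρd, div_pos_iff_of_pos_right (by positivity), mul_pos_iff_of_pos_left hd]
    constructor <;> intro h <;> linarith
  refine ⟨ρ, 1 - ρ, hx_lim, hy_lim, by ring, hρd, fun h => hd_lt.1 h.1, fun h => ?_⟩
  exact ⟨hd_lt.2 h, by linarith [hd_lt.2 h]⟩

/-- Oblique cusp position (Proposition 10.1(ii)): for Petrov's parametrization of the
arctic curve of the one-cut hexagon (cuts `[a_i,b_i]` with `a₁ = -n₁-b`, `b₁ = -n₁`,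
`a₂ = 0`, `b₂ = d`, `a₃ = n₂+d`, `b₃ = n₂+d+c'`), the values
`x(a₂) = lim_{w→0} x(w)` and `y(a₂) = lim_{w→0} y(w)` exist and satisfy
`1 - d - y(a₂) = x(a₂) - d = d(n₁c' - (n₂+d)b)/((n₁+b)(n₂+d))`; in particular the
cuspidal point lies on the extension of the left-hand (slope `-1`) segment of the cut
strictly below its tip (i.e. `x(a₂) > d` and `y(a₂) < 1 - d`) iff `n₂b - n₁c' < -db`. -/
theorem oblique_cusp_position (n₁ n₂ d b c' : ℝ)
    (hn₁ : 0 < n₁) (hn₂ : 0 < n₂) (hd : 0 < d) (hb : 0 < b) (hc' : 0 < c')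
    (hsum : b + d + c' = 1)
    (P S x y : ℝ → ℝ)
    (hP : ∀ w, P w = ((w + n₁) / (w + n₁ + b)) * ((w - d) / w) *
        ((w - (n₂ + d + c')) / (w - (n₂ + d))))
    (hS : ∀ w, S w = (1 / (w + n₁) - 1 / (w + n₁ + b)) + (1 / (w - d) - 1 / w) +
        (1 / (w - (n₂ + d + c')) - 1 / (w - (n₂ + d))))
    (hx : ∀ w, x w = w + (P w - 1) / S w)
    (hy : ∀ w, y w = 1 - (P w - 1) ^ 2 / (P w * S w)) :
    ∃ Lx Ly : ℝ,
      Filter.Tendsto x (nhdsWithin 0 ({0} : Set ℝ)ᶜ) (nhds Lx) ∧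
      Filter.Tendsto y (nhdsWithin 0 ({0} : Set ℝ)ᶜ) (nhds Ly) ∧
      1 - d - Ly = Lx - d ∧
      Lx - d = d * (n₁ * c' - (n₂ + d) * b) / ((n₁ + b) * (n₂ + d)) ∧
      ((d < Lx ∧ Ly < 1 - d) ↔ n₂ * b - n₁ * c' < -(d * b)) :=
  oblique_cusp_position_general n₁ n₂ d b c' hn₁ hn₂ hd hb hc' P S x y hP hS hx hy
end
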